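/- arXiv:2602.23124 — 8 statements merged into one kernel-verified Lean document; each statement's English description precedes it below -/
import Mathlib

section
/- Let h be a real-valued random variable with τ(t) = t·P(|h| > t) and σ(t) = (1/t)·E(h²·1_{|h| ≤ t}). Then for every M > 0 one has τ(M) = 2M·∫_M^∞ (σ(t)/t²) dt − σ(M). -/
open MeasureTheory Filter

lemma lint_inv_cube {c : ℝ} (hc : 0 < c) :
    ∫⁻ t in Set.Ioi c, ENNReal.ofReal ((t ^ 3)⁻¹) = ENNReal.ofReal ((2 * c ^ 2)⁻¹) := by
  have h1 : ∫⁻ t in Set.Ioi c, ENNReal.ofReal ((t ^ 3)⁻¹)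
      = ∫⁻ t in Set.Ioi c, ENNReal.ofReal (t ^ (-3 : ℝ)) := by
    refine setLIntegral_congr_fun measurableSet_Ioi (fun t ht => ?_)
    rw [Real.rpow_neg (le_of_lt (hc.trans ht)),
      show (3:ℝ) = ((3:ℕ):ℝ) by norm_num, Real.rpow_natCast]
  rw [h1, ← ofReal_integral_eq_lintegral_ofReal
    (integrableOn_Ioi_rpow_of_lt (by norm_num) hc)
    ((ae_restrict_mem measurableSet_Ioi).mono fun t ht =>
      Real.rpow_nonneg (le_of_lt (hc.trans ht)) _),
    integral_Ioi_rpow_of_lt (by norm_num) hc]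
  congr 1
  rw [show (-3 + 1 : ℝ) = -2 by norm_num, Real.rpow_neg hc.le,
    show (2:ℝ) = ((2:ℕ):ℝ) by norm_num, Real.rpow_natCast]
  field_simp

/-- τ(M) = 2M·∫_M^∞ (σ(t)/t²) dt − σ(M), where τ(t) = t·P(|h| > t) and
σ(t) = (1/t)·E(h²·1_{|h| ≤ t}). -/
theorem stmt_1 {Ω : Type*} [MeasurableSpace Ω] (μ : Measure Ω) [IsProbabilityMeasure μ]
    (h : Ω → ℝ) (hm : Measurable h) (τ σ : ℝ → ℝ)
    (hτ : ∀ t, 0 < t → τ t = t * (μ {ω | t < |h ω|}).toReal)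
    (hσ : ∀ t, 0 < t → σ t = t⁻¹ * ∫ ω in {ω | |h ω| ≤ t}, (h ω) ^ 2 ∂μ)
    (M : ℝ) (hM : 0 < M) :
    τ M = 2 * M * (∫ t in Set.Ioi M, σ t / t ^ 2) - σ M := by
  classical
  set A : ℝ → Set Ω := fun t => {ω | |h ω| ≤ t} with hAdef
  have hAmeas : ∀ t, MeasurableSet (A t) := fun t =>
    measurableSet_le hm.abs measurable_const
  -- integrability of h^2 on A t
  have hInt : ∀ t : ℝ, IntegrableOn (fun ω => h ω ^ 2) (A t) μ := by
    intro t
    refine Integrable.mono' (integrable_const (t ^ 2))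
      ((hm.pow_const 2).aestronglyMeasurable.restrict) ?_
    filter_upwards [ae_restrict_mem (hAmeas t)] with ω hω
    rw [Real.norm_eq_abs, abs_of_nonneg (sq_nonneg _)]
    calc h ω ^ 2 = |h ω| ^ 2 := (sq_abs _).symm
      _ ≤ t ^ 2 := pow_le_pow_left₀ (abs_nonneg _) hω 2
  -- φ t = ∫_{A t} h², monotone in t
  set φ : ℝ → ℝ := fun t => ∫ ω in A t, h ω ^ 2 ∂μ with hφdef
  have hφmono : Monotone φ := fun s t hst =>
    setIntegral_mono_set (hInt t) (ae_of_all _ fun ω => sq_nonneg _)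
      (ae_of_all _ fun ω hω => le_trans hω hst)
  have hφmeas : Measurable φ := hφmono.measurable
  have hφnonneg : ∀ t, 0 ≤ φ t := fun t =>
    setIntegral_nonneg (hAmeas t) fun ω _ => sq_nonneg _
  -- L t : lintegral version
  set L : ℝ → ENNReal := fun t => ∫⁻ ω in A t, ENNReal.ofReal (h ω ^ 2) ∂μ with hLdef
  have hLtop : ∀ t : ℝ, L t ≠ ⊤ := by
    intro t
    have hle : L t ≤ ENNReal.ofReal (t ^ 2) * μ (A t) := by
      rw [← setLIntegral_const]
      refine setLIntegral_mono measurable_const fun ω hω => ?_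
      refine ENNReal.ofReal_le_ofReal ?_
      calc h ω ^ 2 = |h ω| ^ 2 := (sq_abs _).symm
        _ ≤ t ^ 2 := pow_le_pow_left₀ (abs_nonneg _) hω 2
    exact ne_top_of_le_ne_top (by finiteness) hle
  have hφL : ∀ t, φ t = (L t).toReal := fun t =>
    integral_eq_lintegral_of_nonneg_ae (ae_of_all _ fun ω => sq_nonneg _)
      ((hm.pow_const 2).aestronglyMeasurable.restrict)
  -- product function
  set f : ℝ × Ω → ENNReal := fun p =>
    Set.indicator {p : ℝ × Ω | |h p.2| ≤ p.1}
      (fun p => ENNReal.ofReal (h p.2 ^ 2 * (p.1 ^ 3)⁻¹)) p with hfdef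
  have hfmeas : Measurable f := by
    refine Measurable.indicator ?_ ?_
    · exact ENNReal.measurable_ofReal.comp
        (((hm.comp measurable_snd).pow_const 2).mul ((measurable_fst.pow_const 3).inv))
    · exact measurableSet_le (hm.comp measurable_snd).abs measurable_fst
  have hinner_ω : ∀ t : ℝ, 0 < t → ∫⁻ ω, f (t, ω) ∂μ = ENNReal.ofReal ((t ^ 3)⁻¹) * L t := by
    intro t ht0
    have h1 : ∀ ω, f (t, ω)
        = Set.indicator (A t) (fun ω => ENNReal.ofReal (h ω ^ 2 * (t ^ 3)⁻¹)) ω := by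
      intro ω
      simp only [hfdef, hAdef, Set.indicator_apply, Set.mem_setOf_eq]
    simp_rw [h1]
    rw [lintegral_indicator (hAmeas t)]
    have h2 : ∀ ω : Ω, ENNReal.ofReal (h ω ^ 2 * (t ^ 3)⁻¹)
        = ENNReal.ofReal ((t ^ 3)⁻¹) * ENNReal.ofReal (h ω ^ 2) := by
      intro ω
      rw [ENNReal.ofReal_mul' (by positivity), mul_comm]
    simp_rw [h2]
    exact lintegral_const_mul _ (hm.pow_const 2).ennreal_ofReal
  have hinner_t : ∀ ω, (∫⁻ t in Set.Ioi M, f (t, ω))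
      = ENNReal.ofReal (h ω ^ 2 * (2 * max M |h ω| ^ 2)⁻¹) := by
    intro ω
    set c := max M (|h ω|) with hc
    have hc0 : 0 < c := lt_of_lt_of_le hM (le_max_left _ _)
    have h1 : ∀ t, f (t, ω)
        = Set.indicator (Set.Ici |h ω|) (fun t => ENNReal.ofReal (h ω ^ 2 * (t ^ 3)⁻¹)) t := by
      intro t
      simp only [hfdef, Set.indicator_apply, Set.mem_setOf_eq, Set.mem_Ici]
    simp_rw [h1]
    rw [lintegral_indicator measurableSet_Ici, Measure.restrict_restrict measurableSet_Ici]
    have hset : (Set.Ici |h ω| ∩ Set.Ioi M : Set ℝ) =ᵐ[volume] Set.Ioi c := by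
      have e1 : (Set.Ici |h ω| : Set ℝ) =ᵐ[volume] Set.Ioi |h ω| := Ioi_ae_eq_Ici.symm
      have e2 : (Set.Ici |h ω| ∩ Set.Ioi M : Set ℝ)
          =ᵐ[volume] (Set.Ioi |h ω| ∩ Set.Ioi M : Set ℝ) := e1.inter (ae_eq_refl _)
      refine e2.trans ?_
      rw [Set.Ioi_inter_Ioi, hc, sup_comm]
      exact ae_eq_refl _
    rw [setLIntegral_congr hset]
    calc ∫⁻ t in Set.Ioi c, ENNReal.ofReal (h ω ^ 2 * (t ^ 3)⁻¹)
        = ∫⁻ t in Set.Ioi c, ENNReal.ofReal (h ω ^ 2) * ENNReal.ofReal ((t ^ 3)⁻¹) :=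
          setLIntegral_congr_fun measurableSet_Ioi
            (fun t ht => ENNReal.ofReal_mul (sq_nonneg _))
      _ = ENNReal.ofReal (h ω ^ 2) * ∫⁻ t in Set.Ioi c, ENNReal.ofReal ((t ^ 3)⁻¹) :=
          lintegral_const_mul _ ((measurable_id.pow_const 3).inv.ennreal_ofReal)
      _ = ENNReal.ofReal (h ω ^ 2) * ENNReal.ofReal ((2 * c ^ 2)⁻¹) := by
          rw [lint_inv_cube hc0]
      _ = ENNReal.ofReal (h ω ^ 2 * (2 * c ^ 2)⁻¹) := (ENNReal.ofReal_mul (sq_nonneg _)).symm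
  -- the bounded function g
  set g : Ω → ℝ := fun ω => h ω ^ 2 * (2 * max M |h ω| ^ 2)⁻¹ with hgdef
  have hgmeas : Measurable g :=
    (hm.pow_const 2).mul (((measurable_const.max hm.abs).pow_const 2).const_mul 2).inv
  have hgnonneg : ∀ ω, 0 ≤ g ω := by
    intro ω
    have : (0:ℝ) < max M |h ω| := lt_of_lt_of_le hM (le_max_left _ _)
    positivity
  have hgle : ∀ ω, g ω ≤ 1 / 2 := by
    intro ω
    have hc0 : (0:ℝ) < max M |h ω| := lt_of_lt_of_le hM (le_max_left _ _)
    have h1 : h ω ^ 2 ≤ max M |h ω| ^ 2 := by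
      calc h ω ^ 2 = |h ω| ^ 2 := (sq_abs _).symm
        _ ≤ max M |h ω| ^ 2 := pow_le_pow_left₀ (abs_nonneg _) (le_max_right _ _) 2
    rw [hgdef]
    rw [div_eq_mul_inv, one_mul] at *
    calc h ω ^ 2 * (2 * max M |h ω| ^ 2)⁻¹ ≤ max M |h ω| ^ 2 * (2 * max M |h ω| ^ 2)⁻¹ := by
          exact mul_le_mul_of_nonneg_right h1 (by positivity)
      _ = 2⁻¹ := by field_simp
  have hgint : Integrable g μ := by
    refine Integrable.mono' (integrable_const (1/2 : ℝ)) hgmeas.aestronglyMeasurable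
      (ae_of_all _ fun ω => ?_)
    rw [Real.norm_eq_abs, abs_of_nonneg (hgnonneg ω)]
    exact hgle ω
  have hgL : ∫⁻ ω, ENNReal.ofReal (g ω) ∂μ = ENNReal.ofReal (∫ ω, g ω ∂μ) :=
    (ofReal_integral_eq_lintegral_ofReal hgint (ae_of_all _ hgnonneg)).symm
  -- Fubini
  have hswap : (∫⁻ t in Set.Ioi M, ∫⁻ ω, f (t, ω) ∂μ) = ∫⁻ ω, (∫⁻ t in Set.Ioi M, f (t, ω)) ∂μ :=
    lintegral_lintegral_swap hfmeas.aemeasurable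
  -- chain of equalities for the lintegral of σ t / t²
  have hφt : ∀ t ∈ Set.Ioi M, σ t / t ^ 2 = φ t * (t ^ 3)⁻¹ := by
    intro t ht
    have ht0 : (0:ℝ) < t := hM.trans ht
    rw [hσ t ht0, hφdef]
    have ht0' : t ≠ 0 := ne_of_gt ht0
    field_simp
    rfl
  have key : (∫ t in Set.Ioi M, σ t / t ^ 2) = ∫ ω, g ω ∂μ := by
    have e0 : (∫ t in Set.Ioi M, σ t / t ^ 2) = ∫ t in Set.Ioi M, φ t * (t ^ 3)⁻¹ :=
      setIntegral_congr_fun measurableSet_Ioi fun t ht => hφt t ht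
    have e1 : (∫ t in Set.Ioi M, φ t * (t ^ 3)⁻¹)
        = (∫⁻ t in Set.Ioi M, ENNReal.ofReal (φ t * (t ^ 3)⁻¹)).toReal := by
      refine integral_eq_lintegral_of_nonneg_ae ?_ ?_
      · filter_upwards [ae_restrict_mem measurableSet_Ioi] with t ht
        have ht0 : (0:ℝ) < t := hM.trans ht
        have := hφnonneg t
        positivity
      · exact (hφmeas.mul ((measurable_id.pow_const 3).inv)).aestronglyMeasurable.restrict
    have e2 : (∫⁻ t in Set.Ioi M, ENNReal.ofReal (φ t * (t ^ 3)⁻¹))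
        = ∫⁻ t in Set.Ioi M, ∫⁻ ω, f (t, ω) ∂μ := by
      refine setLIntegral_congr_fun measurableSet_Ioi (fun t ht => ?_)
      have ht0 : (0:ℝ) < t := hM.trans ht
      rw [hinner_ω t ht0, ENNReal.ofReal_mul' (by positivity), hφL t,
        ENNReal.ofReal_toReal (hLtop t), mul_comm]
    have e3 : (∫⁻ ω, (∫⁻ t in Set.Ioi M, f (t, ω)) ∂μ) = ∫⁻ ω, ENNReal.ofReal (g ω) ∂μ :=
      lintegral_congr fun ω => hinner_t ω
    rw [e0, e1, e2, hswap, e3, hgL, ENNReal.toReal_ofReal (integral_nonneg hgnonneg)]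
  -- compute ∫ g
  have hAc : {ω | M < |h ω|} = (A M)ᶜ := by
    ext ω
    simp [hAdef, not_le]
  have hgA : (∫ ω in A M, g ω ∂μ) = φ M * (2 * M ^ 2)⁻¹ := by
    have e : ∀ ω ∈ A M, g ω = h ω ^ 2 * (2 * M ^ 2)⁻¹ := by
      intro ω hω
      rw [hgdef]
      simp only
      rw [max_eq_left hω]
    rw [setIntegral_congr_fun (hAmeas M) e, integral_mul_const]
  have hgAc : (∫ ω in (A M)ᶜ, g ω ∂μ) = (μ (A M)ᶜ).toReal * (1 / 2) := by
    have e : ∀ ω ∈ (A M)ᶜ, g ω = 1 / 2 := by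
      intro ω hω
      have hgt : M < |h ω| := by simpa [hAdef, not_le] using hω
      have hne : |h ω| ≠ 0 := ne_of_gt (hM.trans hgt)
      rw [hgdef]
      simp only
      have hne' : h ω ≠ 0 := fun h0 => hne (by rw [h0, abs_zero])
      rw [max_eq_right hgt.le, ← sq_abs, sq_abs]
      rw [mul_inv, ← mul_assoc, mul_comm (h ω ^ 2), mul_assoc,
        mul_inv_cancel₀ (pow_ne_zero 2 hne'), mul_one]
      norm_num
    rw [setIntegral_congr_fun (hAmeas M).compl e, setIntegral_const, smul_eq_mul, measureReal_def]
  have hgsplit : (∫ ω, g ω ∂μ) = φ M * (2 * M ^ 2)⁻¹ + (μ (A M)ᶜ).toReal * (1 / 2) := by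
    rw [← integral_add_compl (hAmeas M) hgint, hgA, hgAc]
  -- final computation
  rw [key, hgsplit, hτ M hM, hσ M hM, hAc]
  have hφMdef : (∫ ω in {ω | |h ω| ≤ M}, h ω ^ 2 ∂μ) = φ M := rfl
  rw [hφMdef]
  field_simp
  ring
end

section
/- Let h be a real-valued random variable with τ(t) = t·P(|h| > t) and σ(t) = (1/t)·E(h²·1_{|h| ≤ t}). Then lim_{M→∞} τ(M) = 0 holds if and only if lim_{M→∞} σ(M) = 0. -/
open MeasureTheory Filter Topology Set

section Aux

variable {Ω : Type*} [MeasurableSpace Ω] (μ : Measure Ω) [IsProbabilityMeasure μ]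
  {h : Ω → ℝ} (hm : Measurable h)

include hm

private lemma measA (t : ℝ) : MeasurableSet {ω | |h ω| ≤ t} :=
  measurableSet_le hm.abs measurable_const

private lemma measB (t : ℝ) : MeasurableSet {ω | t < |h ω|} :=
  measurableSet_lt measurable_const hm.abs

private lemma intOn (t : ℝ) : IntegrableOn (fun ω => (h ω)^2) {ω | |h ω| ≤ t} μ := by
  apply Measure.integrableOn_of_bounded (M := t^2) (measure_ne_top μ _)
    (hm.pow_const 2).aestronglyMeasurable
  rw [ae_restrict_iff' (measA hm t)]
  filter_upwards with ω hω
  have hω' : |h ω| ≤ t := hω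
  rw [Real.norm_eq_abs, abs_of_nonneg (sq_nonneg _), ← sq_abs (h ω)]
  exact pow_le_pow_left₀ (abs_nonneg _) hω' 2

private lemma Inonneg (t : ℝ) : 0 ≤ ∫ ω in {ω | |h ω| ≤ t}, (h ω)^2 ∂μ :=
  setIntegral_nonneg (measA hm t) (fun ω _ => sq_nonneg _)

/-- σ(t) ≤ t -/
private lemma sigma_self_le {t : ℝ} (ht : 0 < t) :
    t⁻¹ * ∫ ω in {ω | |h ω| ≤ t}, (h ω)^2 ∂μ ≤ t := by
  have hb : ‖∫ ω in {ω | |h ω| ≤ t}, (h ω)^2 ∂μ‖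
      ≤ t^2 * (μ {ω | |h ω| ≤ t}).toReal := by
    apply norm_setIntegral_le_of_norm_le_const (measure_lt_top μ _)
    intro x hx
    have hx' : |h x| ≤ t := hx
    rw [Real.norm_eq_abs, abs_of_nonneg (sq_nonneg _), ← sq_abs (h x)]
    exact pow_le_pow_left₀ (abs_nonneg _) hx' 2
  have hμ : (μ {ω | |h ω| ≤ t}).toReal ≤ 1 := by
    simpa using ENNReal.toReal_mono ENNReal.one_ne_top (prob_le_one (μ := μ))
  have h1 : ∫ ω in {ω | |h ω| ≤ t}, (h ω)^2 ∂μ ≤ t^2 := by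
    calc ∫ ω in {ω | |h ω| ≤ t}, (h ω)^2 ∂μ ≤ ‖∫ ω in {ω | |h ω| ≤ t}, (h ω)^2 ∂μ‖ :=
          le_abs_self _
    _ ≤ t^2 * (μ {ω | |h ω| ≤ t}).toReal := hb
    _ ≤ t^2 * 1 := by nlinarith [ENNReal.toReal_nonneg (a := μ {ω | |h ω| ≤ t})]
    _ = t^2 := by ring
  calc t⁻¹ * ∫ ω in {ω | |h ω| ≤ t}, (h ω)^2 ∂μ ≤ t⁻¹ * t^2 := by
        have := inv_pos.mpr ht; nlinarith
  _ = t := by field_simp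

/-- key inequality 1: τ(t) ≤ 2σ(2t) + τ(2t)/2 -/
private lemma key1 {t : ℝ} (ht : 0 < t) :
    t * (μ {ω | t < |h ω|}).toReal ≤
      t⁻¹ * (∫ ω in {ω | |h ω| ≤ 2*t}, (h ω)^2 ∂μ)
      + (1/2) * ((2*t) * (μ {ω | 2*t < |h ω|}).toReal) := by
  set A : Set Ω := {ω | t < |h ω|} ∩ {ω | |h ω| ≤ 2*t} with hA
  have hmA : MeasurableSet A := (measB hm t).inter (measA hm (2*t))
  have hset : {ω | t < |h ω|} = A ∪ {ω | 2*t < |h ω|} := by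
    ext ω
    simp only [hA, Set.mem_setOf_eq, Set.mem_union, Set.mem_inter_iff]
    constructor
    · intro hlt
      by_cases hc : |h ω| ≤ 2*t
      · exact Or.inl ⟨hlt, hc⟩
      · exact Or.inr (by linarith)
    · rintro (⟨h1, _⟩ | h2)
      · exact h1
      · linarith
  have hdisj : Disjoint A {ω | 2*t < |h ω|} := by
    rw [Set.disjoint_left]
    rintro x ⟨_, hx2⟩ hx3
    simp only [Set.mem_setOf_eq] at hx2 hx3
    linarith
  have hμ : (μ {ω | t < |h ω|}).toReal
      = (μ A).toReal + (μ {ω | 2*t < |h ω|}).toReal := by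
    rw [hset, measure_union hdisj (measB hm (2*t)),
      ENNReal.toReal_add (measure_ne_top μ _) (measure_ne_top μ _)]
  have h1 : t^2 * (μ A).toReal ≤ ∫ ω in A, (h ω)^2 ∂μ := by
    apply setIntegral_ge_of_const_le_real hmA (measure_ne_top μ _)
    · intro x hx
      have hx' : t < |h x| := hx.1
      rw [← sq_abs (h x)]
      exact pow_le_pow_left₀ ht.le hx'.le 2
    · exact (intOn μ hm (2*t)).mono_set Set.inter_subset_right
  have h2 : ∫ ω in A, (h ω)^2 ∂μ ≤ ∫ ω in {ω | |h ω| ≤ 2*t}, (h ω)^2 ∂μ := by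
    apply setIntegral_mono_set (intOn μ hm (2*t))
      (Eventually.of_forall (fun ω => sq_nonneg _))
    exact HasSubset.Subset.eventuallyLE Set.inter_subset_right
  have hinv : (0:ℝ) < t⁻¹ := inv_pos.mpr ht
  have hit : t⁻¹ * t^2 = t := by field_simp
  have h3 : t * (μ A).toReal ≤ t⁻¹ * ∫ ω in {ω | |h ω| ≤ 2*t}, (h ω)^2 ∂μ := by
    calc t * (μ A).toReal = t⁻¹ * (t^2 * (μ A).toReal) := by rw [← mul_assoc, hit]
    _ ≤ t⁻¹ * ∫ ω in A, (h ω)^2 ∂μ := by nlinarith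
    _ ≤ t⁻¹ * ∫ ω in {ω | |h ω| ≤ 2*t}, (h ω)^2 ∂μ := by nlinarith
  rw [hμ]
  have hb : (0:ℝ) ≤ (μ {ω | 2*t < |h ω|}).toReal := ENNReal.toReal_nonneg
  nlinarith

/-- key inequality 2: σ(t) ≤ 2τ(t/2) + σ(t/2)/2 -/
private lemma key2 {t : ℝ} (ht : 0 < t) :
    t⁻¹ * (∫ ω in {ω | |h ω| ≤ t}, (h ω)^2 ∂μ) ≤
      2 * ((t/2) * (μ {ω | t/2 < |h ω|}).toReal)
      + (1/2) * ((t/2)⁻¹ * ∫ ω in {ω | |h ω| ≤ t/2}, (h ω)^2 ∂μ) := by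
  set A : Set Ω := {ω | t/2 < |h ω|} ∩ {ω | |h ω| ≤ t} with hA
  have hmA : MeasurableSet A := (measB hm (t/2)).inter (measA hm t)
  have hset : {ω | |h ω| ≤ t} = {ω | |h ω| ≤ t/2} ∪ A := by
    ext ω
    simp only [hA, Set.mem_setOf_eq, Set.mem_union, Set.mem_inter_iff]
    constructor
    · intro hle
      by_cases hc : |h ω| ≤ t/2
      · exact Or.inl hc
      · exact Or.inr ⟨by linarith, hle⟩
    · rintro (h1 | ⟨_, h2⟩)
      · linarith
      · exact h2
  have hdisj : Disjoint {ω | |h ω| ≤ t/2} A := by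
    rw [Set.disjoint_left]
    rintro x hx1 ⟨hx2, _⟩
    simp only [Set.mem_setOf_eq] at hx1 hx2
    linarith
  have hsplit : ∫ ω in {ω | |h ω| ≤ t}, (h ω)^2 ∂μ
      = (∫ ω in {ω | |h ω| ≤ t/2}, (h ω)^2 ∂μ) + ∫ ω in A, (h ω)^2 ∂μ := by
    rw [hset]
    exact setIntegral_union hdisj hmA (intOn μ hm (t/2))
      ((intOn μ hm t).mono_set Set.inter_subset_right)
  have h1 : ∫ ω in A, (h ω)^2 ∂μ ≤ t^2 * (μ {ω | t/2 < |h ω|}).toReal := by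
    have hb : ‖∫ ω in A, (h ω)^2 ∂μ‖ ≤ t^2 * (μ A).toReal := by
      apply norm_setIntegral_le_of_norm_le_const (measure_lt_top μ _)
      intro x hx
      have hx' : |h x| ≤ t := hx.2
      rw [Real.norm_eq_abs, abs_of_nonneg (sq_nonneg _), ← sq_abs (h x)]
      exact pow_le_pow_left₀ (abs_nonneg _) hx' 2
    have hμ : (μ A).toReal ≤ (μ {ω | t/2 < |h ω|}).toReal :=
      ENNReal.toReal_mono (measure_ne_top μ _) (measure_mono Set.inter_subset_left)
    calc ∫ ω in A, (h ω)^2 ∂μ ≤ ‖∫ ω in A, (h ω)^2 ∂μ‖ := le_abs_self _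
    _ ≤ t^2 * (μ A).toReal := hb
    _ ≤ t^2 * (μ {ω | t/2 < |h ω|}).toReal := by nlinarith
  have hinv : (0:ℝ) < t⁻¹ := inv_pos.mpr ht
  have hit : t⁻¹ * t^2 = t := by field_simp
  have h2 : t⁻¹ * ∫ ω in A, (h ω)^2 ∂μ ≤ 2 * ((t/2) * (μ {ω | t/2 < |h ω|}).toReal) := by
    calc t⁻¹ * ∫ ω in A, (h ω)^2 ∂μ ≤ t⁻¹ * (t^2 * (μ {ω | t/2 < |h ω|}).toReal) := by
          nlinarith
    _ = t * (μ {ω | t/2 < |h ω|}).toReal := by rw [← mul_assoc, hit]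
    _ = 2 * ((t/2) * (μ {ω | t/2 < |h ω|}).toReal) := by ring
  have h3 : t⁻¹ * ∫ ω in {ω | |h ω| ≤ t/2}, (h ω)^2 ∂μ
      = (1/2) * ((t/2)⁻¹ * ∫ ω in {ω | |h ω| ≤ t/2}, (h ω)^2 ∂μ) := by
    have : (t:ℝ)⁻¹ = (1/2) * (t/2)⁻¹ := by field_simp
    rw [this]; ring
  rw [hsplit, mul_add, h3]
  linarith

/-- t · μ{|h| > 2ⁿt} → 0 as n → ∞. -/
private lemma limP {t : ℝ} (ht : 0 < t) :
    Tendsto (fun n : ℕ => t * (μ {ω | 2^n * t < |h ω|}).toReal) atTop (𝓝 0) := by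
  set s : ℕ → Set Ω := fun n => {ω | 2^n * t < |h ω|} with hs
  have hanti : Antitone s := by
    intro n m hnm ω hω
    simp only [hs, Set.mem_setOf_eq] at *
    have : (2:ℝ)^n ≤ 2^m := pow_le_pow_right₀ one_le_two hnm
    nlinarith
  have hempty : ⋂ n, s n = ∅ := by
    ext ω
    simp only [Set.mem_iInter, Set.mem_empty_iff_false, iff_false, not_forall, hs,
      Set.mem_setOf_eq, not_lt]
    obtain ⟨n, hn⟩ := pow_unbounded_of_one_lt (|h ω| / t) one_lt_two
    exact ⟨n, by rw [div_lt_iff₀ ht] at hn; nlinarith⟩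
  have hlim : Tendsto (fun n => μ (s n)) atTop (𝓝 0) := by
    have := tendsto_measure_iInter_atTop (μ := μ)
      (fun n => ((measB hm _).nullMeasurableSet)) hanti ⟨0, measure_ne_top μ _⟩
    rwa [hempty, measure_empty] at this
  have hreal : Tendsto (fun n => (μ (s n)).toReal) atTop (𝓝 0) := by
    have := (ENNReal.tendsto_toReal ENNReal.zero_ne_top).comp hlim
    simpa [Function.comp_def] using this
  have := hreal.const_mul t
  simpa using this

end Aux

set_option maxHeartbeats 1000000 in
/-- lim_{M→∞} τ(M) = 0 holds if and only if lim_{M→∞} σ(M) = 0, where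
τ(t) = t·P(|h| > t) and σ(t) = (1/t)·E(h²·1_{|h| ≤ t}). -/
theorem stmt_2 {Ω : Type*} [MeasurableSpace Ω] (μ : Measure Ω) [IsProbabilityMeasure μ]
    (h : Ω → ℝ) (hm : Measurable h) (τ σ : ℝ → ℝ)
    (hτ : ∀ t, 0 < t → τ t = t * (μ {ω | t < |h ω|}).toReal)
    (hσ : ∀ t, 0 < t → σ t = t⁻¹ * ∫ ω in {ω | |h ω| ≤ t}, (h ω) ^ 2 ∂μ) :
    Tendsto τ atTop (nhds 0) ↔ Tendsto σ atTop (nhds 0) := by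
  constructor
  · -- τ → 0 ⇒ σ → 0
    intro hτ0
    rw [Metric.tendsto_atTop] at hτ0 ⊢
    intro ε hε
    obtain ⟨T0, hT0⟩ := hτ0 (ε/8) (by linarith)
    set T := max T0 1 with hTdef
    have hT1 : (1:ℝ) ≤ T := le_max_right _ _
    have hTpos : (0:ℝ) < T := by linarith
    have Hτ : ∀ s, T ≤ s → s * (μ {ω | s < |h ω|}).toReal ≤ ε/8 := by
      intro s hs
      have hs0 : 0 < s := lt_of_lt_of_le hTpos hs
      have hd := hT0 s (le_trans (le_max_left _ _) hs)
      rw [Real.dist_eq, sub_zero, hτ s hs0] at hd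
      exact le_of_lt (lt_of_le_of_lt (le_abs_self _) hd)
    have claim : ∀ n : ℕ, ∀ t : ℝ, T ≤ t / 2^n →
        t⁻¹ * (∫ ω in {ω | |h ω| ≤ t}, (h ω)^2 ∂μ)
          ≤ ε/2 - (ε/2) * (1/2)^n
            + (1/2)^n * ((t/2^n)⁻¹ * ∫ ω in {ω | |h ω| ≤ t/2^n}, (h ω)^2 ∂μ) := by
      intro n
      induction n with
      | zero => intro t _; simp
      | succ n ih =>
        intro t htn
        have h2n : (0:ℝ) < 2^n := by positivity
        have h2n1 : (0:ℝ) < 2^(n+1) := by positivity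
        have htpos : 0 < t := by
          have h1 : T * 2^(n+1) ≤ t := by
            rw [le_div_iff₀ h2n1] at htn; exact htn
          nlinarith
        have heq : t/2/2^n = t/2^(n+1) := by
          rw [div_div, mul_comm, ← pow_succ]
        have hhalf : T ≤ (t/2) / 2^n := by rw [heq]; exact htn
        have hhalfT : T ≤ t/2 := by
          calc T ≤ (t/2)/2^n := hhalf
          _ ≤ t/2 := div_le_self (by positivity) (one_le_pow₀ one_le_two)
        have k2 := key2 μ hm htpos
        have hτhalf : (t/2) * (μ {ω | t/2 < |h ω|}).toReal ≤ ε/8 := Hτ _ hhalfT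
        have ihh := ih (t/2) hhalf
        rw [heq] at ihh
        have e1 : (ε/2) * (1/2:ℝ)^(n+1) = (1/2) * ((ε/2) * (1/2)^n) := by ring
        have e2 : ((1:ℝ)/2)^(n+1)
              * ((t/2^(n+1))⁻¹ * ∫ ω in {ω | |h ω| ≤ t/2^(n+1)}, (h ω)^2 ∂μ)
            = (1/2) * ((1/2:ℝ)^n
              * ((t/2^(n+1))⁻¹ * ∫ ω in {ω | |h ω| ≤ t/2^(n+1)}, (h ω)^2 ∂μ)) := by
          ring
        linarith
    refine ⟨max (16*T^2/ε) (2*T), fun t ht => ?_⟩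
    have ht1 : 16*T^2/ε ≤ t := le_trans (le_max_left _ _) ht
    have ht2 : 2*T ≤ t := le_trans (le_max_right _ _) ht
    have htpos : 0 < t := by nlinarith
    have hx1 : (1:ℝ) ≤ t / T := (one_le_div hTpos).mpr (by linarith)
    set m := ⌊t / T⌋₊ with hmdef
    have hm1 : 1 ≤ m := Nat.le_floor (by exact_mod_cast hx1)
    set n := Nat.log 2 m with hndef
    have hlow : (2:ℝ)^n ≤ t/T := by
      have h1 := Nat.pow_log_le_self 2 (by omega : m ≠ 0)
      calc ((2:ℝ))^n = ((2^n : ℕ) : ℝ) := by push_cast; ring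
      _ ≤ (m:ℝ) := by exact_mod_cast h1
      _ ≤ t/T := Nat.floor_le (by positivity)
    have hhigh : t/T < 2^(n+1) := by
      have h1 : m < 2^(n+1) := Nat.lt_pow_succ_log_self (by norm_num) m
      have h2 : t/T < m + 1 := Nat.lt_floor_add_one _
      have h3 : (m:ℝ) + 1 ≤ ((2:ℝ))^(n+1) := by exact_mod_cast Nat.succ_le_of_lt h1
      linarith
    have h2n : (0:ℝ) < 2^n := by positivity
    have hTn : T ≤ t / 2^n := by
      rw [le_div_iff₀ h2n]
      rw [le_div_iff₀ hTpos] at hlow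
      linarith [hlow]
    have hup : t / 2^n < 2*T := by
      rw [div_lt_iff₀ h2n]
      rw [div_lt_iff₀ hTpos] at hhigh
      have e : (2:ℝ)^(n+1) = 2*2^n := by ring
      nlinarith
    have hc := claim n t hTn
    have hupos : 0 < t/2^n := by positivity
    have hσself := sigma_self_le μ hm hupos
    set u := t / 2^n with hudef
    have hu : (1/2:ℝ)^n = u/t := by
      rw [hudef, one_div, inv_pow]
      field_simp
    have hbound : (1/2:ℝ)^n * ((u)⁻¹ * ∫ ω in {ω | |h ω| ≤ u}, (h ω)^2 ∂μ)
        ≤ (1/2)^n * u :=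
      mul_le_mul_of_nonneg_left hσself (by positivity)
    have hq : (1/2:ℝ)^n * u < ε/4 := by
      rw [hu, div_mul_eq_mul_div, div_lt_iff₀ htpos]
      rw [div_le_iff₀ hε] at ht1
      nlinarith
    have hp : (0:ℝ) ≤ (ε/2) * (1/2)^n := by positivity
    have hσnn : 0 ≤ t⁻¹ * ∫ ω in {ω | |h ω| ≤ t}, (h ω)^2 ∂μ :=
      mul_nonneg (by positivity) (Inonneg μ hm t)
    rw [Real.dist_eq, sub_zero, hσ t htpos, abs_of_nonneg hσnn]
    linarith
  · -- σ → 0 ⇒ τ → 0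
    intro hσ0
    rw [Metric.tendsto_atTop] at hσ0 ⊢
    intro ε hε
    obtain ⟨T0, hT0⟩ := hσ0 (ε/8) (by linarith)
    set T := max T0 1 with hTdef
    have hT1 : (1:ℝ) ≤ T := le_max_right _ _
    have hTpos : (0:ℝ) < T := by linarith
    have Hσ : ∀ s, T ≤ s → s⁻¹ * (∫ ω in {ω | |h ω| ≤ s}, (h ω)^2 ∂μ) ≤ ε/8 := by
      intro s hs
      have hs0 : 0 < s := lt_of_lt_of_le hTpos hs
      have hd := hT0 s (le_trans (le_max_left _ _) hs)
      rw [Real.dist_eq, sub_zero, hσ s hs0] at hd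
      exact le_of_lt (lt_of_le_of_lt (le_abs_self _) hd)
    have claim : ∀ n : ℕ, ∀ t : ℝ, T ≤ t →
        t * (μ {ω | t < |h ω|}).toReal
          ≤ ε/2 - (ε/2) * (1/2)^n + t * (μ {ω | 2^n * t < |h ω|}).toReal := by
      intro n
      induction n with
      | zero => intro t _; norm_num
      | succ n ih =>
        intro t htT
        have htpos : 0 < t := lt_of_lt_of_le hTpos htT
        have h2t : T ≤ 2*t := by linarith
        have k1 := key1 μ hm htpos
        have hσ2t : (2*t)⁻¹ * (∫ ω in {ω | |h ω| ≤ 2*t}, (h ω)^2 ∂μ) ≤ ε/8 := Hσ _ h2t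
        have einv : t⁻¹ * (∫ ω in {ω | |h ω| ≤ 2*t}, (h ω)^2 ∂μ)
            = 2 * ((2*t)⁻¹ * ∫ ω in {ω | |h ω| ≤ 2*t}, (h ω)^2 ∂μ) := by
          rw [mul_inv, ← mul_assoc, ← mul_assoc, mul_inv_cancel₀ two_ne_zero, one_mul]
        have ihh := ih (2*t) h2t
        have heq : {ω | 2^n * (2*t) < |h ω|} = {ω | 2^(n+1) * t < |h ω|} := by
          ext ω
          have : (2:ℝ)^n * (2*t) = 2^(n+1)*t := by ring
          simp [this]
        rw [heq] at ihh
        have e1 : (ε/2) * (1/2:ℝ)^(n+1) = (1/2) * ((ε/2) * (1/2)^n) := by ring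
        have e2 : (2*t) * (μ {ω | 2^(n+1) * t < |h ω|}).toReal
            = 2 * (t * (μ {ω | 2^(n+1) * t < |h ω|}).toReal) := by ring
        linarith
    refine ⟨T, fun t ht => ?_⟩
    have htpos : 0 < t := lt_of_lt_of_le hTpos ht
    have hlim := limP μ hm htpos (h := h)
    have hrhs : Tendsto (fun n : ℕ => ε/2 - (ε/2) * (1/2)^n
        + t * (μ {ω | 2^n * t < |h ω|}).toReal) atTop (𝓝 (ε/2 - (ε/2)*0 + 0)) := by
      exact (tendsto_const_nhds.sub (tendsto_const_nhds.mul
        (tendsto_pow_atTop_nhds_zero_of_lt_one (by norm_num) (by norm_num)))).add hlim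
    have hle : t * (μ {ω | t < |h ω|}).toReal ≤ ε/2 - (ε/2)*0 + 0 :=
      ge_of_tendsto' hrhs (fun n => claim n t ht)
    have hτnn : 0 ≤ t * (μ {ω | t < |h ω|}).toReal :=
      mul_nonneg htpos.le ENNReal.toReal_nonneg
    rw [Real.dist_eq, sub_zero, hτ t htpos, abs_of_nonneg hτnn]
    linarith
end

section
/- Let h be a real-valued random variable, δ_N = E(h·1_{|h| ≤ N}) and σ_N = (1/N)·E(h²·1_{|h| ≤ N}). Then for every η > 0 there exists N_η ∈ ℕ such that δ_N² ≤ η·N·(1 + σ_N) holds for all N ≥ N_η. -/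
open MeasureTheory Filter Topology

/-- For every η > 0 there exists N_η ∈ ℕ such that δ_N² ≤ η·N·(1 + σ_N) for all N ≥ N_η,
where δ_N = E(h·1_{|h| ≤ N}) and σ_N = (1/N)·E(h²·1_{|h| ≤ N}). -/
theorem stmt_3 {Ω : Type*} [MeasurableSpace Ω] (μ : Measure Ω) [IsProbabilityMeasure μ]
    (h : Ω → ℝ) (hm : Measurable h) (δ σ : ℕ → ℝ)
    (hδ : ∀ N : ℕ, δ N = ∫ ω in {ω | |h ω| ≤ (N : ℝ)}, h ω ∂μ)
    (hσ : ∀ N : ℕ, σ N = (N : ℝ)⁻¹ * ∫ ω in {ω | |h ω| ≤ (N : ℝ)}, (h ω) ^ 2 ∂μ) :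
    ∀ η > (0:ℝ), ∃ Nη : ℕ, ∀ N : ℕ, Nη ≤ N → (δ N) ^ 2 ≤ η * N * (1 + σ N) := by
  intro η hη
  -- tail sets
  set S : ℕ → Set Ω := fun M => {ω | (M:ℝ) < |h ω|} with hS
  have hSm : ∀ M, MeasurableSet (S M) := fun M =>
    measurableSet_lt measurable_const hm.abs
  have hiInter : (⋂ M, S M) = ∅ := by
    ext ω
    simp only [Set.mem_iInter, Set.mem_setOf_eq, Set.mem_empty_iff_false, iff_false, not_forall,
      not_lt, hS]
    obtain ⟨M, hM⟩ := exists_nat_gt (|h ω|)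
    exact ⟨M, hM.le⟩
  have htend : Tendsto (fun M => μ (S M)) atTop (𝓝 0) := by
    have hA : Antitone S := by
      intro a b hab ω hω
      have hω' : (b:ℝ) < |h ω| := hω
      show (a:ℝ) < |h ω|
      exact lt_of_le_of_lt (Nat.cast_le.2 hab) hω'
    have h2 : Tendsto (μ ∘ S) atTop (𝓝 (μ (⋂ n, S n))) :=
      tendsto_measure_iInter_atTop (fun M => (hSm M).nullMeasurableSet) hA
        ⟨0, measure_ne_top μ _⟩
    rw [hiInter, measure_empty] at h2
    exact h2
  have hev : ∀ᶠ M in atTop, μ (S M) < ENNReal.ofReal (η/2) :=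
    htend.eventually_lt_const (ENNReal.ofReal_pos.2 (by positivity))
  obtain ⟨M, hM⟩ := hev.exists
  have hp : (μ (S M)).toReal ≤ η/2 :=
    ENNReal.toReal_le_of_le_ofReal (by positivity) hM.le
  refine ⟨max (M + 1) ⌈2*(M:ℝ)^2/η⌉₊, fun N hN => ?_⟩
  have hNM : M + 1 ≤ N := le_trans (le_max_left _ _) hN
  have hN1 : (1:ℕ) ≤ N := le_trans (Nat.le_add_left _ _) hNM
  have hNc : ⌈2*(M:ℝ)^2/η⌉₊ ≤ N := le_trans (le_max_right _ _) hN
  have h2M : 2*(M:ℝ)^2 ≤ η * N := by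
    rw [← div_le_iff₀' hη] at *
    calc 2*(M:ℝ)^2/η ≤ ⌈2*(M:ℝ)^2/η⌉₊ := Nat.le_ceil _
    _ ≤ N := by exact_mod_cast hNc
  have hMN : (M:ℝ) ≤ N := by exact_mod_cast Nat.le_of_succ_le hNM
  -- sets
  set A : Set Ω := {ω | |h ω| ≤ (N:ℝ)} with hA
  set C : Set Ω := {ω | |h ω| ≤ (M:ℝ)} with hC
  set B : Set Ω := A \ C with hB
  have hAm : MeasurableSet A := measurableSet_le hm.abs measurable_const
  have hCm : MeasurableSet C := measurableSet_le hm.abs measurable_const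
  have hBm : MeasurableSet B := hAm.diff hCm
  have hCA : C ⊆ A := fun ω hω => le_trans hω hMN
  have hBS : B ⊆ S M := by
    intro ω hω
    have h2 : ¬ |h ω| ≤ (M:ℝ) := hω.2
    exact not_le.mp h2
  -- integrability on A
  have habs : IntegrableOn (fun ω => |h ω|) A μ := by
    refine Measure.integrableOn_of_bounded (M := (N:ℝ)) (measure_ne_top μ _)
      hm.abs.aestronglyMeasurable ((ae_restrict_mem hAm).mono fun ω hω => ?_)
    simpa [hA, Real.norm_eq_abs, abs_abs] using hω
  have hsq : IntegrableOn (fun ω => h ω ^ 2) A μ := by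
    refine Measure.integrableOn_of_bounded (M := (N:ℝ)^2) (measure_ne_top μ _)
      (hm.pow_const 2).aestronglyMeasurable ((ae_restrict_mem hAm).mono fun ω hω => ?_)
    rw [Real.norm_eq_abs, abs_of_nonneg (sq_nonneg _), ← sq_abs]
    exact pow_le_pow_left₀ (abs_nonneg _) hω 2
  -- basic quantities
  set q : ℝ := (μ B).toReal with hq
  set I : ℝ := ∫ ω in B, h ω ^ 2 ∂μ with hI
  set T : ℝ := ∫ ω in A, h ω ^ 2 ∂μ with hT
  have hq0 : 0 ≤ q := ENNReal.toReal_nonneg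
  have hI0 : 0 ≤ I := setIntegral_nonneg hBm fun ω _ => sq_nonneg _
  have hT0 : 0 ≤ T := setIntegral_nonneg hAm fun ω _ => sq_nonneg _
  have hIT : I ≤ T := by
    refine setIntegral_mono_set hsq ?_ (HasSubset.Subset.eventuallyLE Set.diff_subset)
    exact Filter.Eventually.of_forall fun ω => sq_nonneg _
  have hqp : q ≤ η/2 := le_trans (ENNReal.toReal_mono (measure_ne_top μ _)
    (measure_mono hBS)) hp
  -- |δ N| ≤ ∫_A |h|
  have hδle : |δ N| ≤ ∫ ω in A, |h ω| ∂μ := by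
    rw [hδ N]
    simpa [Real.norm_eq_abs] using
      norm_integral_le_integral_norm (μ := μ.restrict A) h
  -- split the integral
  have hsplit : ∫ ω in A, |h ω| ∂μ = (∫ ω in C, |h ω| ∂μ) + ∫ ω in B, |h ω| ∂μ := by
    rw [← setIntegral_union Set.disjoint_sdiff_right hBm (habs.mono_set hCA)
      (habs.mono_set Set.diff_subset), Set.union_diff_cancel hCA]
  -- first piece ≤ M
  have hCle : (∫ ω in C, |h ω| ∂μ) ≤ M := by
    have hb := norm_setIntegral_le_of_norm_le_const (μ := μ) (s := C) (C := (M:ℝ)) (f := fun ω => |h ω|)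
      (measure_lt_top μ _) (fun x hx => by simpa [hC, Real.norm_eq_abs, abs_abs] using hx)
    have h1 : (μ C).toReal ≤ 1 := by
      refine ENNReal.toReal_le_of_le_ofReal zero_le_one ?_
      simpa using prob_le_one (μ := μ) (s := C)
    calc (∫ ω in C, |h ω| ∂μ) ≤ ‖∫ ω in C, |h ω| ∂μ‖ :=
        le_trans (le_abs_self _) (le_of_eq (Real.norm_eq_abs _).symm)
      _ ≤ (M:ℝ) * (μ C).toReal := hb
      _ ≤ (M:ℝ) * 1 := by
          exact mul_le_mul_of_nonneg_left h1 (Nat.cast_nonneg M)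
      _ = M := mul_one _
  -- Cauchy–Schwarz on B
  have hCS : (∫ ω in B, |h ω| ∂μ) ≤ Real.sqrt I * Real.sqrt q := by
    have h22 : (2:ℝ).HolderConjugate 2 := Real.HolderConjugate.two_two
    have hml2 : MemLp (fun ω => |h ω|) (ENNReal.ofReal 2) (μ.restrict B) := by
      have htop : MemLp (fun ω => |h ω|) ⊤ (μ.restrict B) := by
        refine memLp_top_of_bound hm.abs.aestronglyMeasurable.restrict (N:ℝ)
          (((ae_restrict_mem hBm).mono fun ω hω => ?_))
        simpa [hA, Real.norm_eq_abs, abs_abs] using hω.1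
      exact htop.mono_exponent le_top
    have hone : MemLp (fun _ : Ω => (1:ℝ)) (ENNReal.ofReal 2) (μ.restrict B) :=
      memLp_const 1
    have := integral_mul_le_Lp_mul_Lq_of_nonneg (μ := μ.restrict B) h22
      (Filter.Eventually.of_forall fun ω => abs_nonneg (h ω))
      (Filter.Eventually.of_forall fun _ => zero_le_one) hml2 hone
    simp only [mul_one] at this
    have hrw : ∀ x : ℝ, |x| ^ (2:ℝ) = x ^ 2 := fun x => by
      rw [show (2:ℝ) = ((2:ℕ):ℝ) by norm_num, Real.rpow_natCast, sq_abs]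
    rw [integral_congr_ae (Filter.Eventually.of_forall fun ω => hrw (h ω))] at this
    simp only [Real.one_rpow, integral_const, smul_eq_mul, mul_one,
      Measure.restrict_apply_univ, measureReal_restrict_apply_univ] at this
    calc (∫ ω in B, |h ω| ∂μ) ≤ I ^ ((1:ℝ)/2) * q ^ ((1:ℝ)/2) := this
      _ = Real.sqrt I * Real.sqrt q := by
          rw [← Real.sqrt_eq_rpow, ← Real.sqrt_eq_rpow]
  -- put everything together
  have hδ2 : |δ N| ≤ (M:ℝ) + Real.sqrt I * Real.sqrt q := by
    rw [hsplit] at hδle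
    have hBle : (∫ ω in B, |h ω| ∂μ) ≤ Real.sqrt I * Real.sqrt q := hCS
    linarith
  have hsqIq : (Real.sqrt I * Real.sqrt q) ^ 2 = I * q := by
    rw [mul_pow, Real.sq_sqrt hI0, Real.sq_sqrt hq0]
  have hNσ : (N:ℝ) * σ N = T := by
    have hNne : (N:ℝ) ≠ 0 := Nat.cast_ne_zero.2 (by omega)
    rw [hσ N, ← hA, ← hT, ← mul_assoc, mul_inv_cancel₀ hNne, one_mul]
  have hfinal : (δ N) ^ 2 ≤ 2*(M:ℝ)^2 + 2 * (I * q) := by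
    have h1 : (δ N)^2 = |δ N|^2 := (sq_abs _).symm
    have h2 : |δ N|^2 ≤ ((M:ℝ) + Real.sqrt I * Real.sqrt q)^2 :=
      pow_le_pow_left₀ (abs_nonneg _) hδ2 2
    nlinarith [sq_nonneg ((M:ℝ) - Real.sqrt I * Real.sqrt q), hsqIq]
  have hIq : 2 * (I * q) ≤ η * T := by
    have : I * q ≤ T * (η/2) :=
      mul_le_mul hIT hqp hq0 hT0
    linarith
  have : (δ N)^2 ≤ η * N + η * T := by linarith
  calc (δ N)^2 ≤ η * N + η * ((N:ℝ) * σ N) := by rw [hNσ]; exact this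
    _ = η * N * (1 + σ N) := by ring
end

section
/- Suppose real-valued measurable functions f₁, f₂, … on a probability space contain a subsequence (f_{k_n}) along which, and along every further subsequence of which, (1/N)·Σ_{n=1}^N f_{k_n} − D_N → 0 in probability for some real-valued random variables D_N. If (f_{k_n}) is not bounded in probability, a contradiction arises; hence one can pass to a further subsequence of (f_{k_n}) that is bounded in probability. -/
open MeasureTheory Filter

/-- Tail probabilities of a fixed measurable real function tend to zero. -/
lemma tail_aux {Ω : Type*} [MeasurableSpace Ω] (μ : Measure Ω) [IsProbabilityMeasure μ]
    (g : Ω → ℝ) (hg : Measurable g) :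
    Tendsto (fun M : ℝ => μ {ω | M < |g ω|}) atTop (nhds 0) := by
  have hmeas : ∀ c : ℝ, MeasurableSet {ω | c < |g ω|} := fun c =>
    measurableSet_lt measurable_const hg.abs
  have hnat : Tendsto (fun n : ℕ => μ {ω | (n : ℝ) < |g ω|}) atTop (nhds 0) := by
    have hanti : Antitone (fun n : ℕ => {ω | (n : ℝ) < |g ω|}) := by
      intro a b hab ω hω
      exact lt_of_le_of_lt (show ((a:ℕ):ℝ) ≤ (b:ℕ) by exact_mod_cast hab) hω
    have hempty : ⋂ n : ℕ, {ω | (n : ℝ) < |g ω|} = ∅ := by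
      ext ω
      simp only [Set.mem_iInter, Set.mem_setOf_eq, Set.mem_empty_iff_false, iff_false, not_forall,
        not_lt]
      obtain ⟨n, hn⟩ := exists_nat_gt |g ω|
      exact ⟨n, hn.le⟩
    have h := tendsto_measure_iInter_atTop (fun n => (hmeas _).nullMeasurableSet) hanti
      ⟨0, measure_ne_top μ _⟩
    rwa [hempty, measure_empty] at h
  have hfloor : Tendsto (fun M : ℝ => μ {ω | ((⌊M⌋₊ : ℕ) : ℝ) < |g ω|}) atTop (nhds 0) :=
    hnat.comp tendsto_nat_floor_atTop
  refine tendsto_of_tendsto_of_tendsto_of_le_of_le' tendsto_const_nhds hfloor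
    (Eventually.of_forall fun M => zero_le) ?_
  filter_upwards [eventually_ge_atTop (0 : ℝ)] with M hM
  exact measure_mono fun ω hω => lt_of_le_of_lt (Nat.floor_le hM) hω

/-- Along any further subsequence, `f (k (m N)) / N → 0` in probability. -/
lemma key_aux {Ω : Type*} [MeasurableSpace Ω] (μ : Measure Ω) [IsProbabilityMeasure μ]
    (f : ℕ → Ω → ℝ) (hm : ∀ n, Measurable (f n))
    (k : ℕ → ℕ) (D : ℕ → Ω → ℝ)
    (hWLLN : ∀ m : ℕ → ℕ, StrictMono m → ∀ ε > (0:ℝ),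
      Tendsto (fun N : ℕ =>
        μ {ω | ε < |(N : ℝ)⁻¹ * ∑ n ∈ Finset.range N, f (k (m n)) ω - D N ω|})
        atTop (nhds 0))
    (m : ℕ → ℕ) (hmm : StrictMono m) :
    Tendsto (fun N : ℕ => μ {ω | (N : ℝ) < |f (k (m N)) ω|}) atTop (nhds 0) := by
  have hA := hWLLN m hmm (1/3) (by norm_num)
  have hB := hWLLN (fun n => m (n + 1)) (fun a b h => hmm (Nat.succ_lt_succ h)) (1/3)
    (by norm_num)
  have h0 : Tendsto (fun N : ℕ => μ {ω | (N : ℝ) / 3 < |f (k (m 0)) ω|}) atTop (nhds 0) := by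
    have hdiv : Tendsto (fun N : ℕ => (N : ℝ) / 3) atTop atTop :=
      (tendsto_natCast_atTop_atTop).atTop_div_const (by norm_num)
    exact (tail_aux μ _ (hm _)).comp hdiv
  have hsum := (h0.add hA).add hB
  rw [add_zero, add_zero] at hsum
  refine tendsto_of_tendsto_of_tendsto_of_le_of_le' tendsto_const_nhds hsum
    (Eventually.of_forall fun N => zero_le) ?_
  filter_upwards [eventually_ge_atTop 1] with N hN
  have hincl : {ω | (N : ℝ) < |f (k (m N)) ω|} ⊆
      ({ω | (N : ℝ) / 3 < |f (k (m 0)) ω|} ∪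
        {ω | 1/3 < |(N : ℝ)⁻¹ * ∑ n ∈ Finset.range N, f (k (m n)) ω - D N ω|}) ∪
        {ω | 1/3 < |(N : ℝ)⁻¹ * ∑ n ∈ Finset.range N, f (k (m (n + 1))) ω - D N ω|} := by
    intro ω hω
    by_contra hc
    simp only [Set.mem_union, Set.mem_setOf_eq, not_or, not_lt] at hc hω
    obtain ⟨⟨h1, h2⟩, h3⟩ := hc
    set Sv := ∑ n ∈ Finset.range N, f (k (m n)) ω with hSv
    set S'v := ∑ n ∈ Finset.range N, f (k (m (n + 1))) ω with hS'v
    have hNR : (1 : ℝ) ≤ (N : ℝ) := by exact_mod_cast hN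
    have hN0 : (N : ℝ) ≠ 0 := (lt_of_lt_of_le zero_lt_one hNR).ne'
    have htel : S'v - Sv = f (k (m N)) ω - f (k (m 0)) ω := by
      rw [hSv, hS'v, ← Finset.sum_sub_distrib]
      exact Finset.sum_range_sub (fun n => f (k (m n)) ω) N
    have hid : f (k (m N)) ω = f (k (m 0)) ω + (N : ℝ) * ((N : ℝ)⁻¹ * S'v - D N ω)
        - (N : ℝ) * ((N : ℝ)⁻¹ * Sv - D N ω) := by
      have hmul : (N : ℝ) * ((N : ℝ)⁻¹ * S'v - D N ω) - (N : ℝ) * ((N : ℝ)⁻¹ * Sv - D N ω)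
          = S'v - Sv := by
        field_simp
        ring
      linarith [htel, hmul]
    have habs : |f (k (m N)) ω| ≤ |f (k (m 0)) ω| + (N : ℝ) * |(N : ℝ)⁻¹ * S'v - D N ω|
        + (N : ℝ) * |(N : ℝ)⁻¹ * Sv - D N ω| := by
      rw [hid]
      have t1 : |f (k (m 0)) ω + (N : ℝ) * ((N : ℝ)⁻¹ * S'v - D N ω)
          - (N : ℝ) * ((N : ℝ)⁻¹ * Sv - D N ω)| ≤
          |f (k (m 0)) ω| + |(N : ℝ) * ((N : ℝ)⁻¹ * S'v - D N ω)|
          + |(N : ℝ) * ((N : ℝ)⁻¹ * Sv - D N ω)| := by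
        calc |f (k (m 0)) ω + (N : ℝ) * ((N : ℝ)⁻¹ * S'v - D N ω)
            - (N : ℝ) * ((N : ℝ)⁻¹ * Sv - D N ω)|
            ≤ |f (k (m 0)) ω + (N : ℝ) * ((N : ℝ)⁻¹ * S'v - D N ω)|
              + |(N : ℝ) * ((N : ℝ)⁻¹ * Sv - D N ω)| := by
              rw [sub_eq_add_neg]
              simpa [abs_neg] using abs_add_le (f (k (m 0)) ω + (N : ℝ) * ((N : ℝ)⁻¹ * S'v - D N ω))
                (-((N : ℝ) * ((N : ℝ)⁻¹ * Sv - D N ω)))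
          _ ≤ _ := add_le_add_left (abs_add_le _ _) _
      calc |f (k (m 0)) ω + (N : ℝ) * ((N : ℝ)⁻¹ * S'v - D N ω)
          - (N : ℝ) * ((N : ℝ)⁻¹ * Sv - D N ω)|
          ≤ |f (k (m 0)) ω| + |(N : ℝ) * ((N : ℝ)⁻¹ * S'v - D N ω)|
            + |(N : ℝ) * ((N : ℝ)⁻¹ * Sv - D N ω)| := t1
        _ = |f (k (m 0)) ω| + (N : ℝ) * |(N : ℝ)⁻¹ * S'v - D N ω|
            + (N : ℝ) * |(N : ℝ)⁻¹ * Sv - D N ω| := by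
            rw [abs_mul, abs_mul, abs_of_nonneg (show (0:ℝ) ≤ (N:ℝ) by positivity)]
    have hb : (N : ℝ) * |(N : ℝ)⁻¹ * S'v - D N ω| ≤ (N : ℝ) * (1/3) :=
      mul_le_mul_of_nonneg_left h3 (Nat.cast_nonneg N)
    have ha : (N : ℝ) * |(N : ℝ)⁻¹ * Sv - D N ω| ≤ (N : ℝ) * (1/3) :=
      mul_le_mul_of_nonneg_left h2 (Nat.cast_nonneg N)
    linarith [habs, h1, ha, hb, hω]
  refine le_trans (measure_mono hincl) ?_
  exact le_trans (measure_union_le _ _) (add_le_add_left (measure_union_le _ _) _)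

/-- If along a subsequence (f_{k_n}) and along every further subsequence the WLLN
(1/N)·Σ f − D_N → 0 in probability holds, then a further subsequence of (f_{k_n})
is bounded in probability. -/
theorem stmt_7 {Ω : Type*} [MeasurableSpace Ω] (μ : Measure Ω) [IsProbabilityMeasure μ]
    (f : ℕ → Ω → ℝ) (hm : ∀ n, Measurable (f n))
    (k : ℕ → ℕ) (hk : StrictMono k)
    (D : ℕ → Ω → ℝ)
    (hWLLN : ∀ m : ℕ → ℕ, StrictMono m → ∀ ε > (0:ℝ),
      Tendsto (fun N : ℕ =>
        μ {ω | ε < |(N : ℝ)⁻¹ * ∑ n ∈ Finset.range N, f (k (m n)) ω - D N ω|})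
        atTop (nhds 0)) :
    ∃ m : ℕ → ℕ, StrictMono m ∧
      Tendsto (fun M : ℝ => ⨆ n : ℕ, μ {ω | M < |f (k (m n)) ω|}) atTop (nhds 0) := by
  refine ⟨id, strictMono_id, ?_⟩
  show Tendsto (fun M : ℝ => ⨆ n : ℕ, μ {ω | M < |f (k n) ω|}) atTop (nhds 0)
  by_contra hcon
  have hne : ¬ ∀ ε : ENNReal, 0 < ε → ∀ᶠ M : ℝ in atTop, (⨆ n : ℕ, μ {ω | M < |f (k n) ω|}) ≤ ε :=
    fun h => hcon (ENNReal.tendsto_nhds_zero.mpr h)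
  push_neg at hne
  obtain ⟨δ, hδpos, hfreq⟩ := hne
  -- hfreq : ∃ᶠ M in atTop, δ < ⨆ n, μ {ω | M < |f (k n) ω|}
  have step : ∀ p j : ℕ, ∃ n, p < n ∧ δ < μ {ω | (j : ℝ) < |f (k n) ω|} := by
    intro p j
    have hev : ∀ᶠ M : ℝ in atTop, ∀ i ∈ Finset.range (p + 1), μ {ω | M < |f (k i) ω|} ≤ δ := by
      rw [Filter.eventually_all_finset]
      intro i _
      exact ((tail_aux μ _ (hm _)).eventually_lt_const hδpos).mono fun M hM => hM.le
    obtain ⟨M, hMj, hδM, hall⟩ := Filter.frequently_atTop.mp (hfreq.and_eventually hev) (j : ℝ)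
    obtain ⟨n, hδn⟩ := lt_iSup_iff.mp hδM
    have hnp : p < n := by
      by_contra h
      push_neg at h
      exact absurd hδn (hall n (Finset.mem_range.mpr (Nat.lt_succ_of_le h))).not_gt
    refine ⟨n, hnp, lt_of_lt_of_le hδn (measure_mono ?_)⟩
    intro ω hω
    exact lt_of_le_of_lt hMj hω
  let g : ℕ → ℕ := fun j => Nat.rec (motive := fun _ => ℕ) (step 0 0).choose
    (fun j ih => (step ih (j + 1)).choose) j
  have hg0 : δ < μ {ω | ((0 : ℕ) : ℝ) < |f (k (g 0)) ω|} := (step 0 0).choose_spec.2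
  have hgs : ∀ j : ℕ, g j < g (j + 1) ∧
      δ < μ {ω | ((j + 1 : ℕ) : ℝ) < |f (k (g (j + 1))) ω|} :=
    fun j => (step (g j) (j + 1)).choose_spec
  have hgmono : StrictMono g := strictMono_nat_of_lt_succ fun j => (hgs j).1
  have hgδ : ∀ j : ℕ, δ < μ {ω | (j : ℝ) < |f (k (g j)) ω|} := by
    intro j
    cases j with
    | zero => exact hg0
    | succ j => exact (hgs j).2
  have hkey := key_aux μ f hm k D hWLLN g hgmono
  obtain ⟨N, hN⟩ := (hkey.eventually_lt_const hδpos).exists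
  exact lt_asymm hN (hgδ N)
end

section
/- Let f₁, f₂, … be real-valued measurable functions on (Ω, F, P). The following are equivalent: (a) there exist sets A₁ ⊆ A₂ ⊆ ⋯ in F with P(A_j) → 1 and a subsequence (f_{k_n}) such that for each j the sequence (f_{k_n}·1_{A_j})_{n∈ℕ} is bounded in L¹(P); (b) there exists a probability measure Q equivalent to P on (Ω, F) under which some subsequence (f_{k_n}) is bounded in L¹(Q). -/
open MeasureTheory Filter
open scoped ENNReal

private lemma stmt_8_dir1 {Ω : Type*} [MeasurableSpace Ω] (μ : Measure Ω) [IsProbabilityMeasure μ]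
    (f : ℕ → Ω → ℝ) (hm : ∀ n, Measurable (f n)) :
    (∃ A : ℕ → Set Ω, (∀ j, MeasurableSet (A j)) ∧ Monotone A ∧
        Tendsto (fun j => μ (A j)) atTop (nhds 1) ∧
        ∃ k : ℕ → ℕ, StrictMono k ∧
          ∀ j : ℕ, ∃ C : ℝ, ∀ n : ℕ, ∫⁻ ω in A j, ENNReal.ofReal |f (k n) ω| ∂μ ≤ ENNReal.ofReal C) →
    (∃ Q : Measure Ω, IsProbabilityMeasure Q ∧ Q ≪ μ ∧ μ ≪ Q ∧
          ∃ k : ℕ → ℕ, StrictMono k ∧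
            ∃ C : ℝ, ∀ n : ℕ, ∫⁻ ω, ENNReal.ofReal |f (k n) ω| ∂Q ≤ ENNReal.ofReal C) := by
  rintro ⟨A, hAmeas, hAmono, htend, k, hk, hbd⟩
  choose C hC using hbd
  set D : ℕ → ℝ≥0∞ := fun j => ENNReal.ofReal (C j) with hD
  set α : ℕ → ℝ≥0∞ := fun j => (2 : ℝ≥0∞)⁻¹ ^ j * (1 + D j)⁻¹ with hα
  have hD_top : ∀ j, D j ≠ ∞ := fun j => ENNReal.ofReal_ne_top
  have h1D_ne0 : ∀ j, (1 : ℝ≥0∞) + D j ≠ 0 := fun j => by simp [add_eq_zero]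
  have h1D_ne_top : ∀ j, (1 : ℝ≥0∞) + D j ≠ ∞ := fun j => by
    simp [ENNReal.add_ne_top, hD_top j]
  have hα_ne0 : ∀ j, α j ≠ 0 := fun j => by
    simp only [hα, mul_ne_zero_iff]
    constructor
    · exact pow_ne_zero _ (by simp)
    · simp [ENNReal.inv_ne_zero, h1D_ne_top j]
  have hα_le : ∀ j, α j ≤ (2 : ℝ≥0∞)⁻¹ ^ j := fun j => by
    calc α j ≤ (2 : ℝ≥0∞)⁻¹ ^ j * 1 := by
          refine mul_le_mul_right ?_ _
          rw [ENNReal.inv_le_one]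
          exact le_add_right le_rfl
      _ = (2 : ℝ≥0∞)⁻¹ ^ j := mul_one _
  have hαD : ∀ j, α j * D j ≤ (2 : ℝ≥0∞)⁻¹ ^ j := fun j => by
    calc α j * D j = (2 : ℝ≥0∞)⁻¹ ^ j * ((1 + D j)⁻¹ * D j) := by ring
      _ ≤ (2 : ℝ≥0∞)⁻¹ ^ j * ((1 + D j)⁻¹ * (1 + D j)) := by
          exact mul_le_mul_right (mul_le_mul_right (le_add_self) _) _
      _ = (2 : ℝ≥0∞)⁻¹ ^ j * 1 := by
          rw [ENNReal.inv_mul_cancel (h1D_ne0 j) (h1D_ne_top j)]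
      _ = _ := mul_one _
  set g : Ω → ℝ≥0∞ := fun ω => ∑' j, (A j).indicator (fun _ => α j) ω with hg
  have hgmeas : Measurable g :=
    Measurable.ennreal_tsum fun j => measurable_const.indicator (hAmeas j)
  have hg_ge : ∀ j ω, ω ∈ A j → α j ≤ g ω := by
    intro j ω hω
    have := ENNReal.le_tsum (f := fun j => (A j).indicator (fun _ => α j) ω) j
    simpa [Set.indicator_of_mem hω] using this
  set Z : ℝ≥0∞ := ∫⁻ ω, g ω ∂μ with hZ
  have hZ_eq : Z = ∑' j, α j * μ (A j) := by
    rw [hZ, hg, lintegral_tsum fun j => (measurable_const.indicator (hAmeas j)).aemeasurable]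
    congr 1
    ext j
    rw [lintegral_indicator (hAmeas j), setLIntegral_const]
  have hS_ne_top : (∑' j, ((2 : ℝ≥0∞)⁻¹) ^ j) ≠ ∞ := by
    rw [ENNReal.tsum_geometric]
    simp [ENNReal.inv_ne_top, tsub_eq_zero_iff_le]
  have hZ_top : Z ≠ ∞ := by
    rw [hZ_eq]
    refine ne_top_of_le_ne_top hS_ne_top (ENNReal.tsum_le_tsum fun j => ?_)
    calc α j * μ (A j) ≤ α j * 1 := mul_le_mul_right prob_le_one _
      _ = α j := mul_one _
      _ ≤ _ := hα_le j
  have hZ_0 : Z ≠ 0 := by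
    obtain ⟨j0, hj0⟩ := (htend.eventually_const_lt (by norm_num : (0:ℝ≥0∞) < 1)).exists
    rw [hZ_eq]
    intro hzero
    have hle := ENNReal.le_tsum (f := fun j => α j * μ (A j)) j0
    rw [hzero] at hle
    simp only [le_zero_iff, mul_eq_zero] at hle
    rcases hle with h | h
    · exact hα_ne0 j0 h
    · exact absurd h hj0.ne'
  have hUnion : μ (⋃ j, A j) = 1 := by
    have h2 := tendsto_measure_iUnion_atTop (μ := μ) hAmono
    exact tendsto_nhds_unique h2 htend
  refine ⟨Z⁻¹ • μ.withDensity g, ?_, ?_, ?_, k, hk, ?_⟩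
  · constructor
    rw [Measure.smul_apply, smul_eq_mul, withDensity_apply _ MeasurableSet.univ,
      Measure.restrict_univ, ← hZ, ENNReal.inv_mul_cancel hZ_0 hZ_top]
  · refine Measure.AbsolutelyContinuous.mk fun s hs hs0 => ?_
    rw [Measure.smul_apply, smul_eq_mul, withDensity_absolutelyContinuous μ g hs0, mul_zero]
  · refine Measure.AbsolutelyContinuous.mk fun s hs hs0 => ?_
    rw [Measure.smul_apply, smul_eq_mul, mul_eq_zero] at hs0
    rcases hs0 with h | h
    · exact absurd h (ENNReal.inv_ne_zero.2 hZ_top)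
    rw [withDensity_apply _ hs] at h
    have hjnull : ∀ j, μ (s ∩ A j) = 0 := by
      intro j
      have h1 : α j * μ (s ∩ A j) ≤ ∫⁻ ω in s, g ω ∂μ := by
        calc α j * μ (s ∩ A j) = ∫⁻ _ in s ∩ A j, α j ∂μ := (setLIntegral_const _ _).symm
          _ ≤ ∫⁻ ω in s ∩ A j, g ω ∂μ := by
              refine setLIntegral_mono_ae hgmeas.aemeasurable ?_
              filter_upwards with ω hω
              exact hg_ge j ω hω.2
          _ ≤ ∫⁻ ω in s, g ω ∂μ :=
              lintegral_mono_set Set.inter_subset_left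
      rw [h, le_zero_iff, mul_eq_zero] at h1
      rcases h1 with h1 | h1
      · exact absurd h1 (hα_ne0 j)
      · exact h1
    have hcompl : μ (s \ ⋃ j, A j) = 0 := by
      refine measure_mono_null (Set.diff_subset_compl s _) ?_
      exact (prob_compl_eq_zero_iff (MeasurableSet.iUnion hAmeas)).2 hUnion
    have hinter : μ (s ∩ ⋃ j, A j) = 0 := by
      rw [Set.inter_iUnion]
      exact measure_iUnion_null hjnull
    calc μ s = μ (s ∩ ⋃ j, A j) + μ (s \ ⋃ j, A j) :=
          (measure_inter_add_diff s (MeasurableSet.iUnion hAmeas)).symm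
      _ = 0 := by rw [hinter, hcompl, add_zero]
  · refine ⟨(Z⁻¹ * ∑' j, ((2 : ℝ≥0∞)⁻¹) ^ j).toReal, fun n => ?_⟩
    have hB_top : Z⁻¹ * (∑' j, ((2 : ℝ≥0∞)⁻¹) ^ j) ≠ ∞ :=
      ENNReal.mul_ne_top (ENNReal.inv_ne_top.2 hZ_0) hS_ne_top
    rw [ENNReal.ofReal_toReal hB_top]
    set F : Ω → ℝ≥0∞ := fun ω => ENNReal.ofReal |f (k n) ω| with hF
    have hFmeas : Measurable F := (hm (k n)).abs.ennreal_ofReal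
    have key : ∫⁻ ω, F ω ∂(μ.withDensity g) = ∑' j, α j * ∫⁻ ω in A j, F ω ∂μ := by
      rw [lintegral_withDensity_eq_lintegral_mul _ hgmeas hFmeas]
      have hpt : ∀ ω, (g * F) ω = ∑' j, (A j).indicator (fun ω => α j * F ω) ω := by
        intro ω
        show (∑' j, (A j).indicator (fun _ => α j) ω) * F ω = _
        rw [← ENNReal.tsum_mul_right]
        refine tsum_congr fun j => ?_
        by_cases hω : ω ∈ A j <;> simp [Set.indicator_of_mem, Set.indicator_of_notMem, hω]
      calc ∫⁻ ω, (g * F) ω ∂μ = ∫⁻ ω, ∑' j, (A j).indicator (fun ω => α j * F ω) ω ∂μ := by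
            simp_rw [hpt]
        _ = ∑' j, ∫⁻ ω, (A j).indicator (fun ω => α j * F ω) ω ∂μ :=
            lintegral_tsum fun j =>
              ((measurable_const.mul hFmeas).indicator (hAmeas j)).aemeasurable
        _ = ∑' j, α j * ∫⁻ ω in A j, F ω ∂μ := by
            congr 1
            ext j
            rw [lintegral_indicator (hAmeas j), lintegral_const_mul _ hFmeas]
    rw [lintegral_smul_measure]
    refine mul_le_mul_right ?_ _
    rw [key]
    refine ENNReal.tsum_le_tsum fun j => ?_
    calc α j * ∫⁻ ω in A j, F ω ∂μ ≤ α j * D j :=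
          mul_le_mul_right (hC j n) _
      _ ≤ ((2 : ℝ≥0∞)⁻¹) ^ j := hαD j

private lemma stmt_8_dir2 {Ω : Type*} [MeasurableSpace Ω] (μ : Measure Ω) [IsProbabilityMeasure μ]
    (f : ℕ → Ω → ℝ) (hm : ∀ n, Measurable (f n)) :
    (∃ Q : Measure Ω, IsProbabilityMeasure Q ∧ Q ≪ μ ∧ μ ≪ Q ∧
          ∃ k : ℕ → ℕ, StrictMono k ∧
            ∃ C : ℝ, ∀ n : ℕ, ∫⁻ ω, ENNReal.ofReal |f (k n) ω| ∂Q ≤ ENNReal.ofReal C) →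
    (∃ A : ℕ → Set Ω, (∀ j, MeasurableSet (A j)) ∧ Monotone A ∧
        Tendsto (fun j => μ (A j)) atTop (nhds 1) ∧
        ∃ k : ℕ → ℕ, StrictMono k ∧
          ∀ j : ℕ, ∃ C : ℝ, ∀ n : ℕ, ∫⁻ ω in A j, ENNReal.ofReal |f (k n) ω| ∂μ ≤ ENNReal.ofReal C) := by
  rintro ⟨Q, hQprob, hQμ, hμQ, k, hk, C, hC⟩
  set h : Ω → ℝ≥0∞ := μ.rnDeriv Q with hh
  have hmeas : Measurable h := Measure.measurable_rnDeriv μ Q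
  have hμeq : Q.withDensity h = μ := Measure.withDensity_rnDeriv_eq μ Q hμQ
  set A : ℕ → Set Ω := fun j => {ω | h ω ≤ j} with hA
  have hAmeas : ∀ j, MeasurableSet (A j) := fun j => hmeas measurableSet_Iic
  have hAmono : Monotone A := by
    intro i j hij ω hω
    simp only [hA, Set.mem_setOf_eq] at hω ⊢
    exact le_trans hω (by exact_mod_cast hij)
  have hUnion : μ (⋃ j, A j) = 1 := by
    have h1 : Q {ω | h ω = ∞} = 0 := by
      have := Measure.rnDeriv_lt_top μ Q
      simpa [hh, ae_iff, not_lt, top_le_iff] using this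
    have h2 : μ {ω | h ω = ∞} = 0 := hμQ h1
    have h3 : (⋃ j, A j)ᶜ ⊆ {ω | h ω = ∞} := by
      intro ω hω
      simp only [Set.mem_compl_iff, Set.mem_iUnion, not_exists, hA, Set.mem_setOf_eq] at hω ⊢
      by_contra hne
      obtain ⟨n, hn⟩ := ENNReal.exists_nat_gt hne
      exact hω n hn.le
    have h4 : μ (⋃ j, A j)ᶜ = 0 := measure_mono_null h3 h2
    rwa [prob_compl_eq_zero_iff (MeasurableSet.iUnion hAmeas)] at h4
  have htend : Tendsto (fun j => μ (A j)) atTop (nhds 1) := by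
    have := tendsto_measure_iUnion_atTop (μ := μ) hAmono
    rwa [hUnion] at this
  refine ⟨A, hAmeas, hAmono, htend, k, hk, fun j => ⟨j * max C 0, fun n => ?_⟩⟩
  have key : ∫⁻ ω in A j, ENNReal.ofReal |f (k n) ω| ∂μ
      = ∫⁻ ω in A j, h ω * ENNReal.ofReal |f (k n) ω| ∂Q := by
    rw [← hμeq, restrict_withDensity (hAmeas j),
      lintegral_withDensity_eq_lintegral_mul _ hmeas ((hm (k n)).abs.ennreal_ofReal)]
    rfl
  rw [key]
  calc ∫⁻ ω in A j, h ω * ENNReal.ofReal |f (k n) ω| ∂Q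
      ≤ ∫⁻ ω in A j, (j : ℝ≥0∞) * ENNReal.ofReal |f (k n) ω| ∂Q := by
        refine setLIntegral_mono_ae ((measurable_const.mul ((hm (k n)).abs.ennreal_ofReal)).aemeasurable) ?_
        filter_upwards with ω hω
        exact mul_le_mul_left hω _
    _ ≤ (j : ℝ≥0∞) * ∫⁻ ω, ENNReal.ofReal |f (k n) ω| ∂Q := by
        rw [lintegral_const_mul _ ((hm (k n)).abs.ennreal_ofReal)]
        exact mul_le_mul_right (setLIntegral_le_lintegral _ _) _
    _ ≤ (j : ℝ≥0∞) * ENNReal.ofReal (max C 0) :=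
        mul_le_mul_right (le_trans (hC n) (ENNReal.ofReal_le_ofReal (le_max_left _ _))) _
    _ = ENNReal.ofReal (j * max C 0) := by
        rw [ENNReal.ofReal_mul (by positivity)]
        simp

/-- Equivalence of the Egorov-type condition (L¹-boundedness of a subsequence on an
increasing exhaustion of sets) with L¹(Q)-boundedness of a subsequence under some
probability measure Q equivalent to P. -/
theorem stmt_8 {Ω : Type*} [MeasurableSpace Ω] (μ : Measure Ω) [IsProbabilityMeasure μ]
    (f : ℕ → Ω → ℝ) (hm : ∀ n, Measurable (f n)) :
    ((∃ A : ℕ → Set Ω, (∀ j, MeasurableSet (A j)) ∧ Monotone A ∧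
        Tendsto (fun j => μ (A j)) atTop (nhds 1) ∧
        ∃ k : ℕ → ℕ, StrictMono k ∧
          ∀ j : ℕ, ∃ C : ℝ, ∀ n : ℕ, ∫⁻ ω in A j, ENNReal.ofReal |f (k n) ω| ∂μ ≤ ENNReal.ofReal C)
      ↔ (∃ Q : Measure Ω, IsProbabilityMeasure Q ∧ Q ≪ μ ∧ μ ≪ Q ∧
          ∃ k : ℕ → ℕ, StrictMono k ∧
            ∃ C : ℝ, ∀ n : ℕ, ∫⁻ ω, ENNReal.ofReal |f (k n) ω| ∂Q ≤ ENNReal.ofReal C)) :=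
  ⟨stmt_8_dir1 μ f hm, stmt_8_dir2 μ f hm⟩
end

section
/- For every m ∈ ℕ, every natural number bound N₀, and every rational ε > 0 with ε < m, there exist natural numbers N₀ < N₁ < N₂ < ⋯ < N_{2^m} and positive reals p₁, …, p_{2^m} satisfying: p_j·N_j² = m·N_{2^m} for all j = 1, …, 2^m, and p_j·N_{j−1} = ε for all j = 2, …, 2^m; moreover, for any δ > 0 the N_j can be chosen large enough that Σ_{j=1}^{2^m} p_j < δ. -/
open Finset

lemma aux_mono' (a b K u d w : ℕ) (ha : 0 < a) (hab : a < b) (hK : 0 < K) (hd : 0 < d) :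
    a ^ (u + d) * b ^ w * K < a ^ u * b ^ (d + w) * K := by
  have hb : 0 < b := lt_trans ha hab
  have h1 : a ^ d < b ^ d := Nat.pow_lt_pow_left hab (by omega)
  have h2 : 0 < a ^ u := Nat.pow_pos ha
  have h3 : 0 < b ^ w := Nat.pow_pos hb
  have : a ^ u * (a ^ d * b ^ w) < a ^ u * (b ^ d * b ^ w) :=
    mul_lt_mul_of_pos_left (mul_lt_mul_of_pos_right h1 h3) h2
  calc a ^ (u + d) * b ^ w * K = (a ^ u * (a ^ d * b ^ w)) * K := by ring
    _ < (a ^ u * (b ^ d * b ^ w)) * K := mul_lt_mul_of_pos_right this hK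
    _ = a ^ u * b ^ (d + w) * K := by ring

/-- Solvability of the recursive system p_j·N_j² = m·N_{2^m} (1 ≤ j ≤ 2^m),
p_j·N_{j−1} = ε (2 ≤ j ≤ 2^m), with natural numbers N₀ < N₁ < ⋯ < N_{2^m},
positive p_j, and Σ p_j < δ. -/
theorem stmt_15 (m : ℕ) (hm : 1 ≤ m) (N₀ : ℕ) (ε : ℚ) (hε : 0 < ε) (hεm : (ε : ℝ) < m)
    (δ : ℝ) (hδ : 0 < δ) :
    ∃ (N : ℕ → ℕ) (p : ℕ → ℝ),
      N₀ < N 1 ∧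
      (∀ j : ℕ, 1 ≤ j → j < 2 ^ m → N j < N (j + 1)) ∧
      (∀ j : ℕ, 1 ≤ j → j ≤ 2 ^ m → 0 < p j) ∧
      (∀ j : ℕ, 1 ≤ j → j ≤ 2 ^ m → p j * (N j : ℝ) ^ 2 = (m : ℝ) * (N (2 ^ m) : ℝ)) ∧
      (∀ j : ℕ, 2 ≤ j → j ≤ 2 ^ m → p j * (N (j - 1) : ℝ) = (ε : ℝ)) ∧
      (∑ j ∈ Finset.Icc 1 (2 ^ m), p j) < δ := by
  set M := 2 ^ m with hM
  set E := 2 ^ M with hEdef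
  set a : ℕ := ε.num.toNat with hadef
  set b : ℕ := m * ε.den with hbdef
  have hnum : 0 < ε.num := Rat.num_pos.mpr hε
  have ha : 0 < a := by omega
  have hden : 0 < ε.den := ε.pos
  -- a < b
  have hεmq : ε < (m : ℚ) := by exact_mod_cast hεm
  have hmulden : (ε : ℚ) * (ε.den : ℚ) = (ε.num : ℚ) := by
    have hd0 : (ε.den : ℚ) ≠ 0 := by exact_mod_cast hden.ne'
    have h := div_mul_cancel₀ (ε.num : ℚ) hd0
    rwa [Rat.num_div_den] at h
  have habq : (a : ℚ) < (b : ℚ) := by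
    have h1 : (ε : ℚ) * (ε.den : ℚ) < (m : ℚ) * (ε.den : ℚ) := by
      apply mul_lt_mul_of_pos_right hεmq
      exact_mod_cast hden
    rw [hmulden] at h1
    have h2 : (a : ℚ) = (ε.num : ℚ) := by
      rw [hadef]; exact_mod_cast Int.toNat_of_nonneg (le_of_lt hnum)
    rw [h2, hbdef]; push_cast; linarith
  have hab : a < b := by exact_mod_cast habq
  have hb : 0 < b := lt_trans ha hab
  -- key rational identity: m * a = ε * b
  have hmaq : (m : ℚ) * (a : ℚ) = ε * (b : ℚ) := by
    have h2 : (a : ℚ) = (ε.num : ℚ) := by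
      rw [hadef]; exact_mod_cast Int.toNat_of_nonneg (le_of_lt hnum)
    rw [h2, hbdef]; push_cast
    rw [← hmulden]; ring
  have hma : (m : ℝ) * (a : ℝ) = (ε : ℝ) * (b : ℝ) := by exact_mod_cast hmaq
  -- choose K
  obtain ⟨K, hK⟩ := exists_nat_gt (max (N₀ : ℝ) ((M : ℝ) * m * (b : ℝ) ^ E / δ))
  have hK1 : (N₀ : ℝ) < K := lt_of_le_of_lt (le_max_left _ _) hK
  have hK2 : (M : ℝ) * m * (b : ℝ) ^ E / δ < K := lt_of_le_of_lt (le_max_right _ _) hK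
  have hKpos : 0 < K := by
    have : (0 : ℝ) ≤ (N₀ : ℝ) := Nat.cast_nonneg _
    have : (0 : ℝ) < K := lt_of_le_of_lt this hK1
    exact_mod_cast this
  set e : ℕ → ℕ := fun j => 2 ^ (M - j) - 1 with he
  set N : ℕ → ℕ := fun j => a ^ e j * b ^ (E - e j) * K with hN
  set p : ℕ → ℝ := fun j => (m : ℝ) * (N M : ℝ) / ((N j : ℝ)) ^ 2 with hp
  have heE : ∀ j, e j < E := by
    intro j
    have h1 : 2 ^ (M - j) ≤ 2 ^ M := Nat.pow_le_pow_right (by norm_num) (Nat.sub_le M j)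
    have h2 : 0 < 2 ^ (M - j) := Nat.pow_pos (by norm_num)
    simp only [he, hEdef]; omega
  have hNpos : ∀ j, 0 < N j := by
    intro j
    simp only [hN]
    exact Nat.mul_pos (Nat.mul_pos (Nat.pow_pos ha) (Nat.pow_pos hb)) hKpos
  have hKleN : ∀ j, K ≤ N j := by
    intro j
    simp only [hN]
    exact Nat.le_mul_of_pos_left K (Nat.mul_pos (Nat.pow_pos ha) (Nat.pow_pos hb))
  have hNM : N M = b ^ E * K := by
    simp only [hN, he]
    simp
  have hppos : ∀ j, 0 < p j := by
    intro j
    simp only [hp]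
    apply div_pos
    · apply mul_pos
      · exact_mod_cast hm
      · exact_mod_cast hNpos M
    · have : (0 : ℝ) < (N j : ℝ) := by exact_mod_cast hNpos j
      positivity
  refine ⟨N, p, ?_, ?_, ?_, ?_, ?_, ?_⟩
  · -- N₀ < N 1
    have : N₀ < K := by exact_mod_cast hK1
    exact lt_of_lt_of_le this (hKleN 1)
  · -- monotone
    intro j hj1 hjM
    have hestrict : e (j + 1) < e j := by
      have h1 : M - j = (M - (j + 1)) + 1 := by omega
      have h2 : 2 ^ (M - j) = 2 * 2 ^ (M - (j + 1)) := by rw [h1, pow_succ]; ring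
      have h3 : 0 < 2 ^ (M - (j + 1)) := Nat.pow_pos (by norm_num)
      simp only [he]; omega
    have hejE : e j < E := heE j
    obtain ⟨d, hd⟩ : ∃ d, e j = e (j + 1) + d := ⟨e j - e (j + 1), by omega⟩
    have hdpos : 0 < d := by omega
    obtain ⟨w, hw⟩ : ∃ w, E - e j = w := ⟨E - e j, rfl⟩
    have hw2 : E - e (j + 1) = d + w := by omega
    simp only [hN]
    rw [hw2, hw, hd]
    exact aux_mono' a b K (e (j+1)) d w ha hab hKpos hdpos
  · intro j _ _; exact hppos j
  · -- p j * N j ^ 2 = m * N M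
    intro j _ _
    have hNj : ((N j : ℝ)) ^ 2 ≠ 0 := by
      have : (0 : ℝ) < (N j : ℝ) := by exact_mod_cast hNpos j
      positivity
    simp only [hp]
    field_simp
    exact mul_div_cancel_right₀ _ (by exact_mod_cast (hNpos j).ne')
  · -- p j * N (j-1) = ε
    intro j hj2 hjM
    have hdouble : e (j - 1) = 2 * e j + 1 := by
      have h1 : M - (j - 1) = (M - j) + 1 := by omega
      have h2 : 2 ^ (M - (j - 1)) = 2 * 2 ^ (M - j) := by rw [h1, pow_succ]; ring
      have h3 : 0 < 2 ^ (M - j) := Nat.pow_pos (by norm_num)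
      simp only [he]; omega
    have hejE : e (j - 1) < E := heE (j - 1)
    obtain ⟨t, ht⟩ : ∃ t, E = 2 * e j + 1 + t := ⟨E - (2 * e j + 1), by omega⟩
    have h1 : E - e j = e j + 1 + t := by omega
    have h2 : E - (2 * e j + 1) = t := by omega
    have hkeyN : a * (N j) ^ 2 = b * ((N M) * (N (j - 1))) := by
      rw [hNM]
      simp only [hN, hdouble]
      rw [h1, h2, ht]
      ring
    have hkey : (a : ℝ) * ((N j : ℝ)) ^ 2 = (b : ℝ) * ((N M : ℝ) * (N (j - 1) : ℝ)) := by
      exact_mod_cast hkeyN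
    have hNj : ((N j : ℝ)) ^ 2 ≠ 0 := by
      have : (0 : ℝ) < (N j : ℝ) := by exact_mod_cast hNpos j
      positivity
    have hb0 : (b : ℝ) ≠ 0 := by
      have : (0 : ℝ) < (b : ℝ) := by exact_mod_cast hb
      exact ne_of_gt this
    simp only [hp]
    rw [div_mul_eq_mul_div, div_eq_iff hNj]
    apply mul_left_cancel₀ hb0
    linear_combination (-(m : ℝ)) * hkey + ((N j : ℝ)) ^ 2 * hma
  · -- sum < δ
    have hKR : (0 : ℝ) < (K : ℝ) := by exact_mod_cast hKpos
    have hbound : ∀ j ∈ Icc 1 M, p j ≤ (m : ℝ) * (b : ℝ) ^ E / K := by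
      intro j _
      have hNjK : (K : ℝ) ≤ (N j : ℝ) := by exact_mod_cast hKleN j
      have hNjpos : (0 : ℝ) < (N j : ℝ) := by exact_mod_cast hNpos j
      simp only [hp, hNM]
      push_cast
      rw [div_le_div_iff₀ (by positivity) hKR, pow_two]
      have h1 : (K : ℝ) * K ≤ (N j : ℝ) * (N j : ℝ) := by nlinarith
      have h3 : (0 : ℝ) ≤ (m : ℝ) * (b : ℝ) ^ E := by positivity
      nlinarith [mul_le_mul_of_nonneg_left h1 h3]
    calc (∑ j ∈ Finset.Icc 1 M, p j) ≤ (Icc 1 M).card • ((m : ℝ) * (b : ℝ) ^ E / K) :=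
          Finset.sum_le_card_nsmul _ _ _ hbound
      _ = (M : ℝ) * ((m : ℝ) * (b : ℝ) ^ E / K) := by
          rw [Nat.card_Icc, Nat.add_sub_cancel, nsmul_eq_mul]
      _ < δ := by
          rw [show (M : ℝ) * ((m : ℝ) * (b : ℝ) ^ E / K) = (M : ℝ) * m * (b : ℝ) ^ E / K by ring]
          rw [div_lt_iff₀ hKR]
          have h3 := (div_lt_iff₀ hδ).mp hK2
          nlinarith
end

section
/- Let S_n = h₁ + ⋯ + h_n (n = 1, …, N) be a martingale with i.i.d. symmetric increments bounded by N (i.e., |h_n| ≤ N a.s.), and define stopping times τ₀ = 0, τ_{k+1} = min{n > τ_k : |S_n − S_{τ_k}| ≥ N}. Set β = P(τ₁ ≤ N). Then P(τ_k ≤ N) ≤ β^k for all k ∈ ℕ, and on the event {τ_{k−1} ≤ N, τ_k > N} one has |S_N| ≤ (2k − 1)·N. -/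
open MeasureTheory ProbabilityTheory Filter
open scoped ENNReal

private noncomputable def pSum (x : ℕ → ℝ) (n : ℕ) : ℝ := ∑ i ∈ Finset.range n, x i

private noncomputable def tst (N : ℕ) : ℕ → (ℕ → ℝ) → ℕ∞
  | 0, _ => 0
  | k+1, x => sInf {m : ℕ∞ | ∃ n j : ℕ, m = (n : ℕ∞) ∧ (j : ℕ∞) = tst N k x ∧ j < n ∧
      (N : ℝ) ≤ |pSum x n - pSum x j|}

private def qset (N : ℕ) (x : ℕ → ℝ) (j : ℕ) : Set ℕ :=
  {n : ℕ | j < n ∧ (N : ℝ) ≤ |pSum x n - pSum x j|}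

private lemma sInf_coe_set (Q : Set ℕ) [Decidable Q.Nonempty] :
    sInf {m : ℕ∞ | ∃ n : ℕ, m = (n : ℕ∞) ∧ n ∈ Q} =
      if Q.Nonempty then ((sInf Q : ℕ) : ℕ∞) else ⊤ := by
  split_ifs with hne
  · refine le_antisymm (sInf_le ⟨sInf Q, rfl, Nat.sInf_mem hne⟩) (le_sInf ?_)
    rintro m ⟨n, rfl, hn⟩
    exact_mod_cast Nat.sInf_le hn
  · rw [Set.not_nonempty_iff_eq_empty] at hne
    rw [show {m : ℕ∞ | ∃ n : ℕ, m = (n : ℕ∞) ∧ n ∈ Q} = ∅ by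
      simp [hne, Set.eq_empty_iff_forall_notMem]]
    exact sInf_empty

private lemma tst_succ {N k : ℕ} {x : ℕ → ℝ} {j : ℕ} (hj : tst N k x = (j : ℕ∞)) :
    tst N (k+1) x = sInf {m : ℕ∞ | ∃ n : ℕ, m = (n : ℕ∞) ∧ n ∈ qset N x j} := by
  show sInf _ = _
  congr 1
  ext m
  constructor
  · rintro ⟨n, j', rfl, hj', hlt, hle⟩
    rw [hj] at hj'
    have : j' = j := by exact_mod_cast hj'
    subst this
    exact ⟨n, rfl, hlt, hle⟩
  · rintro ⟨n, rfl, hlt, hle⟩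
    exact ⟨n, j, rfl, hj.symm, hlt, hle⟩

private lemma tst_succ_top {N k : ℕ} {x : ℕ → ℝ} (hj : tst N k x = ⊤) :
    tst N (k+1) x = ⊤ := by
  show sInf _ = _
  rw [show {m : ℕ∞ | ∃ n j : ℕ, m = (n : ℕ∞) ∧ (j : ℕ∞) = tst N k x ∧ j < n ∧
      (N : ℝ) ≤ |pSum x n - pSum x j|} = ∅ by
    simp only [Set.eq_empty_iff_forall_notMem]
    rintro m ⟨n, j, rfl, hj', _⟩
    rw [hj] at hj'
    exact (ENat.coe_ne_top j) hj']
  exact sInf_empty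

private lemma tst_ne_top {N k : ℕ} {x : ℕ → ℝ} (hk : tst N (k+1) x ≠ ⊤) :
    ∃ j : ℕ, tst N k x = (j : ℕ∞) := by
  cases hc : tst N k x using ENat.recTopCoe with
  | top => exact absurd (tst_succ_top hc) hk
  | coe j => exact ⟨j, rfl⟩

private lemma tst_succ_eq_coe_iff {N k : ℕ} {x : ℕ → ℝ} {j n : ℕ}
    (hj : tst N k x = (j : ℕ∞)) :
    tst N (k+1) x = (n : ℕ∞) ↔ n ∈ qset N x j ∧ ∀ m, m < n → m ∉ qset N x j := by
  classical
  rw [tst_succ hj, sInf_coe_set]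
  split_ifs with hne
  · rw [show ((sInf (qset N x j) : ℕ) : ℕ∞) = (n : ℕ∞) ↔ sInf (qset N x j) = n from
      Nat.cast_inj]
    constructor
    · rintro rfl
      exact ⟨Nat.sInf_mem hne, fun m hm => Nat.notMem_of_lt_sInf hm⟩
    · rintro ⟨hn, hmin⟩
      refine le_antisymm (Nat.sInf_le hn) (le_of_not_gt fun hlt => ?_)
      exact hmin _ hlt (Nat.sInf_mem hne)
  · simp only [(ENat.coe_ne_top n).symm, false_iff]
    rintro ⟨hn, -⟩
    exact hne ⟨n, hn⟩

private lemma tst_succ_le_coe_iff {N k : ℕ} {x : ℕ → ℝ} {j : ℕ}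
    (hj : tst N k x = (j : ℕ∞)) (c : ℕ) :
    tst N (k+1) x ≤ (c : ℕ∞) ↔ ∃ n, n ≤ c ∧ n ∈ qset N x j := by
  classical
  rw [tst_succ hj, sInf_coe_set]
  split_ifs with hne
  · rw [Nat.cast_le]
    constructor
    · intro hle
      exact ⟨sInf (qset N x j), hle, Nat.sInf_mem hne⟩
    · rintro ⟨n, hnc, hn⟩
      exact le_trans (Nat.sInf_le hn) hnc
  · rw [top_le_iff]
    exact iff_of_false (ENat.coe_ne_top c) (fun ⟨n, _, hn⟩ => hne ⟨n, hn⟩)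

private lemma pSum_congr {x y : ℕ → ℝ} {n : ℕ} (hxy : ∀ i, i < n → x i = y i) :
    pSum x n = pSum y n :=
  Finset.sum_congr rfl fun i hi => hxy i (Finset.mem_range.mp hi)

private lemma tst_congr (N : ℕ) : ∀ (m : ℕ) {j : ℕ} {x y : ℕ → ℝ},
    (∀ i, i < j → x i = y i) → tst N m x = (j : ℕ∞) → tst N m y = (j : ℕ∞)
  | 0, j, x, y, hxy, hx => by
      have h0 : (0 : ℕ∞) = (j : ℕ∞) := hx
      have : j = 0 := by exact_mod_cast h0.symm
      subst this; rfl
  | (m+1), j, x, y, hxy, hx => by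
      obtain ⟨j', hj'⟩ := tst_ne_top (x := x) (hx ▸ ENat.coe_ne_top j)
      rw [tst_succ_eq_coe_iff hj'] at hx
      obtain ⟨⟨hjj', hge⟩, hmin⟩ := hx
      have hj'y : tst N m y = (j' : ℕ∞) :=
        tst_congr N m (fun i hi => hxy i (hi.trans hjj')) hj'
      rw [tst_succ_eq_coe_iff hj'y]
      have hps : ∀ n, n ≤ j → pSum y n = pSum x n := fun n hn =>
        (pSum_congr fun i hi => hxy i (lt_of_lt_of_le hi hn)).symm
      constructor
      · exact ⟨hjj', by rwa [hps j le_rfl, hps j' (le_of_lt hjj')]⟩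
      · intro m' hm' hmem
        refine hmin m' hm' ?_
        obtain ⟨h1, h2⟩ := hmem
        exact ⟨h1, by rwa [hps m' (le_of_lt hm'), hps j' (le_of_lt hjj')] at h2⟩

private lemma tst_bound (N : ℕ) {x : ℕ → ℝ} (hb : ∀ m, |x m| ≤ (N : ℝ)) :
    ∀ (i : ℕ) {j : ℕ}, tst N i x = (j : ℕ∞) → |pSum x j| ≤ 2 * i * N
  | 0, j, hx => by
      have h0 : (0 : ℕ∞) = (j : ℕ∞) := hx
      have : j = 0 := by exact_mod_cast h0.symm
      subst this
      simp [pSum]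
  | (i+1), j, hx => by
      obtain ⟨j', hj'⟩ := tst_ne_top (x := x) (hx ▸ ENat.coe_ne_top j)
      rw [tst_succ_eq_coe_iff hj'] at hx
      obtain ⟨⟨hjj', -⟩, hmin⟩ := hx
      have ih := tst_bound N hb i hj'
      have hstep : |pSum x j - pSum x j'| ≤ 2 * N := by
        have hNnn : (0:ℝ) ≤ (N:ℝ) := Nat.cast_nonneg N
        have hjpos : 0 < j := (Nat.zero_le j').trans_lt hjj'
        have hsplit : pSum x j - pSum x (j-1) = x (j-1) := by
          have hj1 : j - 1 + 1 = j := Nat.succ_pred_eq_of_pos hjpos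
          calc pSum x j - pSum x (j-1) = pSum x ((j-1)+1) - pSum x (j-1) := by rw [hj1]
          _ = x (j-1) := by simp [pSum, Finset.sum_range_succ]
        rcases eq_or_lt_of_le (Nat.succ_le_of_lt hjj') with heq | hlt
        · -- j = j' + 1
          have : pSum x j - pSum x j' = x j' := by
            rw [← heq]; simp [pSum, Finset.sum_range_succ]
          rw [this]
          calc |x j'| ≤ (N:ℝ) := hb j'
          _ ≤ 2 * N := by linarith
        · have hj1lt : j - 1 < j := Nat.pred_lt hjpos.ne'
          have hj'lt : j' < j - 1 := by omega
          have hnot := hmin (j-1) hj1lt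
          simp only [qset, Set.mem_setOf_eq, not_and, not_le] at hnot
          have hlt2 : |pSum x (j-1) - pSum x j'| < N := hnot hj'lt
          calc |pSum x j - pSum x j'|
              = |(pSum x j - pSum x (j-1)) + (pSum x (j-1) - pSum x j')| := by congr 1; ring
            _ ≤ |pSum x j - pSum x (j-1)| + |pSum x (j-1) - pSum x j'| := abs_add_le _ _
            _ ≤ N + N := add_le_add (hsplit ▸ hb (j-1)) (le_of_lt hlt2)
            _ = 2 * N := by ring
      have habs : |pSum x j| ≤ |pSum x j'| + |pSum x j - pSum x j'| := by
        calc |pSum x j| = |pSum x j' + (pSum x j - pSum x j')| := by congr 1; ring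
          _ ≤ _ := abs_add_le _ _
      push_cast
      push_cast at ih
      linarith

private lemma measurable_pSum (n : ℕ) : Measurable fun x : ℕ → ℝ => pSum x n :=
  Finset.measurable_sum _ fun i _ => measurable_pi_apply i

private def extFin (j : ℕ) (v : Fin j → ℝ) : ℕ → ℝ :=
  fun i => if hi : i < j then v ⟨i, hi⟩ else 0

private lemma measurable_extFin (j : ℕ) : Measurable (extFin j) :=
  measurable_pi_lambda _ fun i => by
    unfold extFin
    split_ifs with hi
    exacts [measurable_pi_apply _, measurable_const]

private lemma extFin_spec (j : ℕ) (v : Fin j → ℝ) (i : ℕ) (hi : i < j) :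
    extFin j v i = v ⟨i, hi⟩ := dif_pos hi

private lemma measurable_tst_eq (N : ℕ) :
    ∀ m j : ℕ, MeasurableSet {x : ℕ → ℝ | tst N m x = (j : ℕ∞)}
  | 0, j => by
      rcases Nat.eq_zero_or_pos j with rfl | hj
      · rw [show {x : ℕ → ℝ | tst N 0 x = ((0:ℕ) : ℕ∞)} = Set.univ by
          ext x; simp only [Set.mem_setOf_eq, Set.mem_univ, iff_true]; rfl]
        exact MeasurableSet.univ
      · rw [show {x : ℕ → ℝ | tst N 0 x = (j : ℕ∞)} = ∅ by
          ext x
          simp only [Set.mem_setOf_eq, Set.mem_empty_iff_false, iff_false]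
          intro hx
          have h0 : (0 : ℕ∞) = (j : ℕ∞) := hx
          have : j = 0 := by exact_mod_cast h0.symm
          omega]
        exact MeasurableSet.empty
  | (m+1), j => by
      have hset : {x : ℕ → ℝ | tst N (m+1) x = (j : ℕ∞)} =
          ⋃ (j' : ℕ) (_ : j' < j),
            ({x : ℕ → ℝ | tst N m x = (j' : ℕ∞)} ∩
              {x : ℕ → ℝ | (N : ℝ) ≤ |pSum x j - pSum x j'|} ∩
              ⋂ (mm : ℕ) (_ : j' < mm) (_ : mm < j),
                {x : ℕ → ℝ | |pSum x mm - pSum x j'| < N}) := by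
        ext x
        simp only [Set.mem_setOf_eq, Set.mem_iUnion, Set.mem_inter_iff, Set.mem_iInter]
        constructor
        · intro hx
          obtain ⟨j', hj'⟩ := tst_ne_top (x := x) (hx ▸ ENat.coe_ne_top j)
          rw [tst_succ_eq_coe_iff hj'] at hx
          obtain ⟨⟨h1, h2⟩, hmin⟩ := hx
          refine ⟨j', h1, ⟨⟨hj', h2⟩, fun mm hm1 hm2 => ?_⟩⟩
          have := hmin mm hm2
          simp only [qset, Set.mem_setOf_eq, not_and, not_le] at this
          exact this hm1
        · rintro ⟨j', hj'j, ⟨⟨hj', h2⟩, hmin⟩⟩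
          rw [tst_succ_eq_coe_iff hj']
          refine ⟨⟨hj'j, h2⟩, fun mm hmj hmem => ?_⟩
          obtain ⟨hm1, hm2⟩ := hmem
          exact absurd hm2 (not_le.mpr (hmin mm hm1 hmj))
      rw [hset]
      refine MeasurableSet.iUnion fun j' => MeasurableSet.iUnion fun _ => ?_
      refine (MeasurableSet.inter (measurable_tst_eq N m j') ?_).inter ?_
      · exact measurableSet_le measurable_const
          (((measurable_pSum j).sub (measurable_pSum j')).abs)
      · refine MeasurableSet.iInter fun mm => MeasurableSet.iInter fun _ =>
          MeasurableSet.iInter fun _ => ?_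
        exact measurableSet_lt (((measurable_pSum mm).sub (measurable_pSum j')).abs)
          measurable_const
/-- For a martingale S_n = h₁ + ⋯ + h_n with i.i.d. symmetric increments bounded by N,
and stopping times τ₀ = 0, τ_{k+1} = min{n > τ_k : |S_n − S_{τ_k}| ≥ N}, setting
β = P(τ₁ ≤ N) one has P(τ_k ≤ N) ≤ β^k, and on {τ_{k−1} ≤ N < τ_k} one has
|S_N| ≤ (2k − 1)·N. -/
theorem stmt_16 {Ω : Type*} [MeasurableSpace Ω] (μ : Measure Ω) [IsProbabilityMeasure μ]
    (N : ℕ) (h : ℕ → Ω → ℝ) (hm : ∀ n, Measurable (h n))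
    (hindep : iIndepFun h μ)
    (hid : ∀ n, Measure.map (h n) μ = Measure.map (h 0) μ)
    (hsymm : Measure.map (fun ω => -(h 0 ω)) μ = Measure.map (h 0) μ)
    (hbdd : ∀ n, ∀ᵐ ω ∂μ, |h n ω| ≤ (N : ℝ))
    (S : ℕ → Ω → ℝ) (hS : ∀ n ω, S n ω = ∑ i ∈ Finset.range n, h i ω)
    (τ : ℕ → Ω → ℕ∞)
    (hτ0 : ∀ ω, τ 0 ω = 0)
    (hτ : ∀ k ω, τ (k + 1) ω =
      sInf {m : ℕ∞ | ∃ n j : ℕ, m = (n : ℕ∞) ∧ (j : ℕ∞) = τ k ω ∧ j < n ∧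
        (N : ℝ) ≤ |S n ω - S j ω|})
    (β : ℝ≥0∞) (hβ : β = μ {ω | τ 1 ω ≤ (N : ℕ∞)}) :
    (∀ k : ℕ, μ {ω | τ k ω ≤ (N : ℕ∞)} ≤ β ^ k) ∧
    (∀ᵐ ω ∂μ, ∀ k : ℕ, 1 ≤ k →
      τ (k - 1) ω ≤ (N : ℕ∞) → (N : ℕ∞) < τ k ω →
        |S N ω| ≤ (2 * (k : ℝ) - 1) * (N : ℝ)) := by
  classical
  -- bridge τ to the deterministic recursion tst
  have hSx : ∀ n ω, S n ω = pSum (fun i => h i ω) n := fun n ω => hS n ω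
  have hτT : ∀ (k : ℕ) (ω : Ω), τ k ω = tst N k (fun n => h n ω) := by
    intro k
    induction k with
    | zero => intro ω; rw [hτ0]; rfl
    | succ k ih =>
        intro ω
        rw [hτ k ω]
        show _ = sInf _
        congr 1
        ext m
        simp only [Set.mem_setOf_eq, ← ih ω]
        constructor <;> rintro ⟨n, j, rfl, h1, h2, h3⟩
        · exact ⟨n, j, rfl, h1, h2, by rw [← hSx n ω, ← hSx j ω]; exact h3⟩
        · exact ⟨n, j, rfl, h1, h2, by rw [hSx n ω, hSx j ω]; exact h3⟩
  constructor
  · -- Part 1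
    intro k
    induction k with
    | zero => rw [pow_zero]; exact prob_le_one
    | succ k ih =>
      -- events
      set E : ℕ → Set Ω := fun j => {ω | τ k ω = (j : ℕ∞)} with hE_def
      set A : ℕ → Set Ω := fun j =>
        {ω | ∃ n, n ≤ N ∧ j < n ∧ (N : ℝ) ≤ |S n ω - S j ω|} with hA_def
      -- E j as a preimage of a measurable set under the first j coordinates
      have hC_meas : ∀ j : ℕ,
          MeasurableSet (extFin j ⁻¹' {x : ℕ → ℝ | tst N k x = (j : ℕ∞)}) :=
        fun j => (measurable_extFin j) (measurable_tst_eq N k j)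
      have hVec_meas : ∀ j : ℕ, Measurable (fun ω (i : Fin j) => h i.1 ω) :=
        fun j => measurable_pi_lambda _ fun i => hm _
      have hE_eq : ∀ j : ℕ, E j = (fun ω (i : Fin j) => h i.1 ω) ⁻¹'
          (extFin j ⁻¹' {x : ℕ → ℝ | tst N k x = (j : ℕ∞)}) := by
        intro j
        ext ω
        simp only [hE_def, Set.mem_setOf_eq, Set.mem_preimage, hτT k ω]
        constructor
        · intro hx
          refine tst_congr N k (fun i hi => ?_) hx
          rw [extFin_spec j _ i hi]
        · intro hx
          refine tst_congr N k (fun i hi => ?_) hx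
          rw [extFin_spec j _ i hi]
      have hE_meas : ∀ j : ℕ, MeasurableSet (E j) := fun j =>
        (hE_eq j) ▸ (hVec_meas j) (hC_meas j)
      -- A j as a preimage under coordinates j..N-1
      set Bx : ℕ → Set (ℕ → ℝ) := fun j =>
        {x | ∃ m, 1 ≤ m ∧ m ≤ N - j ∧ (N : ℝ) ≤ |pSum x m|} with hBx_def
      have hBx_meas : ∀ j, MeasurableSet (Bx j) := by
        intro j
        have : Bx j = ⋃ (m : ℕ) (_ : 1 ≤ m) (_ : m ≤ N - j),
            {x : ℕ → ℝ | (N : ℝ) ≤ |pSum x m|} := by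
          ext x
          simp only [hBx_def, Set.mem_setOf_eq, Set.mem_iUnion]
          tauto
        rw [this]
        refine MeasurableSet.iUnion fun m => MeasurableSet.iUnion fun _ =>
          MeasurableSet.iUnion fun _ => ?_
        exact measurableSet_le measurable_const (measurable_pSum m).abs
      have hW_meas : ∀ j : ℕ, Measurable (fun ω (i : Fin (N - j)) => h (j + i.1) ω) :=
        fun j => measurable_pi_lambda _ fun i => hm _
      have hA_eq : ∀ j : ℕ, A j = (fun ω (i : Fin (N - j)) => h (j + i.1) ω) ⁻¹'
          (extFin (N - j) ⁻¹' Bx j) := by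
        intro j
        ext ω
        simp only [hA_def, Set.mem_setOf_eq, Set.mem_preimage, hBx_def]
        constructor
        · rintro ⟨n, hnN, hjn, hge⟩
          refine ⟨n - j, by omega, by omega, ?_⟩
          have hsum : pSum (extFin (N - j) (fun i : Fin (N - j) => h (j + i.1) ω)) (n - j)
              = S n ω - S j ω := by
            rw [hS n ω, hS j ω, ← Finset.sum_Ico_eq_sub _ (le_of_lt hjn)]
            rw [Finset.sum_Ico_eq_sum_range]
            refine Finset.sum_congr rfl fun i hi => ?_
            rw [Finset.mem_range] at hi
            rw [extFin_spec (N - j) _ i (by omega)]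
          rw [hsum]; exact hge
        · rintro ⟨m, hm1, hm2, hge⟩
          refine ⟨j + m, by omega, by omega, ?_⟩
          have hsum : pSum (extFin (N - j) (fun i : Fin (N - j) => h (j + i.1) ω)) m
              = S (j + m) ω - S j ω := by
            rw [hS (j + m) ω, hS j ω, ← Finset.sum_Ico_eq_sub _ (by omega : j ≤ j + m)]
            rw [Finset.sum_Ico_eq_sum_range]
            have : j + m - j = m := by omega
            rw [this]
            refine Finset.sum_congr rfl fun i hi => ?_
            rw [Finset.mem_range] at hi
            rw [extFin_spec (N - j) _ i (by omega)]
          rw [hsum] at hge; exact hge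
      -- independence of the two coordinate blocks
      have hIndep : ∀ j : ℕ, IndepFun (fun ω (i : Fin j) => h i.1 ω)
          (fun ω (i : Fin (N - j)) => h (j + i.1) ω) μ := by
        intro j
        have hdisj : Disjoint (Finset.range j) (Finset.Ico j N) := by
          rw [Finset.disjoint_left]
          intro a ha hb
          rw [Finset.mem_range] at ha
          rw [Finset.mem_Ico] at hb
          omega
        have h0 := hindep.indepFun_finset (Finset.range j) (Finset.Ico j N) hdisj hm
        have hφ : Measurable (fun (r : (i : (Finset.range j : Finset ℕ)) → ℝ)
            (i : Fin j) => r ⟨i.1, Finset.mem_range.mpr i.2⟩) :=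
          measurable_pi_lambda _ fun i => measurable_pi_apply _
        have hψ : Measurable (fun (r : (i : (Finset.Ico j N : Finset ℕ)) → ℝ)
            (i : Fin (N - j)) => r ⟨j + i.1, Finset.mem_Ico.mpr
              ⟨Nat.le_add_right _ _, by have := i.2; omega⟩⟩) :=
          measurable_pi_lambda _ fun i => measurable_pi_apply _
        exact h0.comp hφ hψ
      -- joint law of any block of length r equals that of the initial block
      have maplaw : ∀ j r : ℕ, Measure.map (fun ω (i : Fin r) => h (j + i.1) ω) μ =
          Measure.pi (fun _ : Fin r => Measure.map (h 0) μ) := by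
        intro j r
        have hmeas : Measurable (fun ω (i : Fin r) => h (j + i.1) ω) :=
          measurable_pi_lambda _ fun i => hm _
        refine (Measure.pi_eq fun s hs => ?_).symm
        rw [Measure.map_apply hmeas (MeasurableSet.univ_pi hs)]
        set sx : ℕ → Set ℝ := fun m =>
          if hm' : m - j < r ∧ j ≤ m then s ⟨m - j, hm'.1⟩ else Set.univ with hsx_def
        have hsx_meas : ∀ m, MeasurableSet (sx m) := by
          intro m
          rw [hsx_def]
          dsimp only
          split_ifs with hm'
          · exact hs _
          · exact MeasurableSet.univ
        have hsx_eq : ∀ i : Fin r, sx (j + i.1) = s i := by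
          intro i
          have hc : (j + i.1) - j < r ∧ j ≤ j + i.1 := ⟨by omega, by omega⟩
          have hfin : (⟨j + i.1 - j, hc.1⟩ : Fin r) = i := Fin.ext (by simp)
          rw [hsx_def]
          dsimp only
          rw [dif_pos hc, hfin]
        have hpre : (fun ω (i : Fin r) => h (j + i.1) ω) ⁻¹' Set.univ.pi s =
            ⋂ m ∈ Finset.Ico j (j + r), h m ⁻¹' sx m := by
          ext ω
          simp only [Set.mem_preimage, Set.mem_pi, Set.mem_univ, forall_true_left,
            Set.mem_iInter, Finset.mem_Ico]
          constructor
          · rintro hx m ⟨hm1, hm2⟩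
            have hlt : m - j < r := by omega
            have := hx ⟨m - j, hlt⟩
            rw [← hsx_eq ⟨m - j, hlt⟩] at this
            have hm3 : j + (m - j) = m := by omega
            rwa [hm3] at this
          · intro hx i
            have := hx (j + i.1) ⟨by omega, by omega⟩
            rwa [hsx_eq i] at this
        rw [hpre]
        rw [hindep.meas_biInter (fun m _ => ⟨sx m, hsx_meas m, rfl⟩)]
        rw [Finset.prod_Ico_eq_prod_range]
        have hr : j + r - j = r := by omega
        rw [hr]
        rw [← Fin.prod_univ_eq_prod_range (fun i => μ (h (j + i) ⁻¹' sx (j + i))) r]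
        refine Finset.prod_congr rfl fun i _ => ?_
        rw [hsx_eq i, ← Measure.map_apply (hm _) (hs i), hid (j + i.1)]
      -- each A j has probability at most β
      have hA_le : ∀ j : ℕ, μ (A j) ≤ β := by
        intro j
        have hBmeas : MeasurableSet (extFin (N - j) ⁻¹' Bx j) :=
          (measurable_extFin (N - j)) (hBx_meas j)
        rw [hA_eq j, ← Measure.map_apply (hW_meas j) hBmeas, maplaw j (N - j),
          ← maplaw 0 (N - j),
          Measure.map_apply (measurable_pi_lambda _ fun i => hm _) hBmeas]
        rw [hβ]
        refine measure_mono fun ω hω => ?_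
        simp only [Set.mem_preimage, hBx_def, Set.mem_setOf_eq] at hω
        obtain ⟨m, hm1, hm2, hge⟩ := hω
        have hsum : pSum (extFin (N - j)
            (fun i : Fin (N - j) => h (0 + i.1) ω)) m = pSum (fun i => h i ω) m := by
          refine Finset.sum_congr rfl fun i hi => ?_
          rw [Finset.mem_range] at hi
          rw [extFin_spec (N - j) _ i (by omega)]
          simp
        rw [hsum] at hge
        show τ 1 ω ≤ (N : ℕ∞)
        rw [hτT 1 ω]
        have h0 : tst N 0 (fun i => h i ω) = ((0 : ℕ) : ℕ∞) := rfl
        refine (tst_succ_le_coe_iff h0 N).mpr ⟨m, by omega, by omega, ?_⟩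
        have : pSum (fun i => h i ω) 0 = 0 := by simp [pSum]
        rw [this, sub_zero]
        exact hge
      -- decomposition of the event
      have hsub : {ω | τ (k+1) ω ≤ (N : ℕ∞)} ⊆
          ⋃ j ∈ Finset.range (N+1), E j ∩ A j := by
        intro ω hω
        simp only [Set.mem_setOf_eq, hτT (k+1) ω] at hω
        have hne : tst N (k+1) (fun n => h n ω) ≠ ⊤ := by
          intro hcon
          rw [hcon] at hω
          exact absurd (top_le_iff.mp hω) (ENat.coe_ne_top N)
        obtain ⟨j, hj⟩ := tst_ne_top hne
        obtain ⟨n, hnN, hjn, hge⟩ := (tst_succ_le_coe_iff hj N).mp hω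
        simp only [Set.mem_iUnion, Finset.mem_range]
        refine ⟨j, by omega, ?_, ?_⟩
        · show τ k ω = (j : ℕ∞)
          rw [hτT k ω]; exact hj
        · exact ⟨n, hnN, hjn, by rw [hSx n ω, hSx j ω]; exact hge⟩
      have hEdisj : (↑(Finset.range (N+1)) : Set ℕ).PairwiseDisjoint
          (fun j => E j) := by
        intro a _ b _ hab
        refine Set.disjoint_left.mpr fun ω ha hb => ?_
        simp only [hE_def, Set.mem_setOf_eq] at ha hb
        rw [ha] at hb
        exact hab (by exact_mod_cast hb)
      have hUsub : ⋃ j ∈ Finset.range (N+1), E j ⊆ {ω | τ k ω ≤ (N : ℕ∞)} := by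
        intro ω hω
        simp only [Set.mem_iUnion, Finset.mem_range] at hω
        obtain ⟨j, hjN, hj⟩ := hω
        simp only [hE_def, Set.mem_setOf_eq] at hj
        show τ k ω ≤ (N : ℕ∞)
        rw [hj]
        exact_mod_cast Nat.lt_succ_iff.mp hjN
      calc μ {ω | τ (k+1) ω ≤ (N : ℕ∞)}
          ≤ μ (⋃ j ∈ Finset.range (N+1), E j ∩ A j) := measure_mono hsub
        _ ≤ ∑ j ∈ Finset.range (N+1), μ (E j ∩ A j) := measure_biUnion_finset_le _ _
        _ = ∑ j ∈ Finset.range (N+1), μ (E j) * μ (A j) := by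
            refine Finset.sum_congr rfl fun j _ => ?_
            rw [hE_eq j, hA_eq j]
            exact (indepFun_iff_measure_inter_preimage_eq_mul.mp (hIndep j)) _ _
              (hC_meas j) ((measurable_extFin (N - j)) (hBx_meas j))
        _ ≤ ∑ j ∈ Finset.range (N+1), μ (E j) * β := by
            refine Finset.sum_le_sum fun j _ => ?_
            exact mul_le_mul_right (hA_le j) _
        _ = μ (⋃ j ∈ Finset.range (N+1), E j) * β := by
            rw [measure_biUnion_finset hEdisj (fun j _ => hE_meas j), Finset.sum_mul]
        _ ≤ μ {ω | τ k ω ≤ (N : ℕ∞)} * β := mul_le_mul_left (measure_mono hUsub) β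
        _ ≤ β ^ k * β := mul_le_mul_left ih β
        _ = β ^ (k+1) := (pow_succ β k).symm
  · -- Part 2
    have hbdd' : ∀ᵐ ω ∂μ, ∀ n, |h n ω| ≤ (N : ℝ) := ae_all_iff.mpr hbdd
    filter_upwards [hbdd'] with ω hb
    intro k hk hle hgt
    obtain ⟨k', rfl⟩ : ∃ k', k = k' + 1 := ⟨k - 1, by omega⟩
    simp only [Nat.add_sub_cancel] at hle
    rw [hτT] at hle hgt
    obtain ⟨j, hj, hjN⟩ := WithTop.le_coe_iff.mp hle
    have hbound := tst_bound N hb k' hj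
    have hdiff : |pSum (fun i => h i ω) N - pSum (fun i => h i ω) j| ≤ (N : ℝ) := by
      rcases eq_or_lt_of_le hjN with rfl | hjlt
      · simp
      · by_contra hcon
        push_neg at hcon
        have : tst N (k'+1) (fun n => h n ω) ≤ (N : ℕ∞) :=
          (tst_succ_le_coe_iff hj N).mpr ⟨N, le_rfl, hjlt, le_of_lt hcon⟩
        exact absurd this (not_le.mpr hgt)
    rw [hSx N ω]
    have habs : |pSum (fun i => h i ω) N| ≤ |pSum (fun i => h i ω) j| +
        |pSum (fun i => h i ω) N - pSum (fun i => h i ω) j| := by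
      calc |pSum (fun i => h i ω) N|
          = |pSum (fun i => h i ω) j +
            (pSum (fun i => h i ω) N - pSum (fun i => h i ω) j)| := by congr 1; ring
        _ ≤ _ := abs_add_le _ _
    push_cast
    push_cast at hbound
    linarith
end

section
/- Let h be a real random variable with P(h = N_k) = k/N_k for each k ∈ ℕ (and h = 0 otherwise), where (N_k) ⊂ ℕ increases to infinity fast enough that Σ_k k/N_k ≤ 1. Define τ_t = t·P(|h| > t) and σ_t = (1/t)·E(h²·1_{|h| ≤ t}). Then, provided (N_k) grows sufficiently fast, lim_{k→∞} τ_{N_k} = 0 while lim_{k→∞} σ_{N_k} = ∞, and lim_{k→∞} τ_{N_k − 1} = ∞ while lim_{k→∞} σ_{N_k − 1} = 0. -/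
open MeasureTheory Filter

private lemma aux_two_mul_le (n : ℕ) : 2 * n ≤ 2 ^ n := by
  induction n with
  | zero => simp
  | succ n ih =>
    rcases Nat.eq_zero_or_pos n with h | h
    · subst h; simp
    · have h2 : 2 ≤ 2 ^ n := Nat.one_lt_two_pow_iff.2 (by omega)
      have : 2 ^ (n+1) = 2 ^ n + 2 ^ n := by rw [pow_succ]; ring
      omega

private lemma aux_A (k m : ℕ) : (k + m + 1) * 2 ^ (2 ^ k + k + m) ≤ 2 ^ 2 ^ (k + m + 1) := by
  have h1 : k + m + 1 ≤ 2 ^ (k + m) := (Nat.lt_two_pow_self (n := k + m))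
  calc (k + m + 1) * 2 ^ (2 ^ k + k + m)
      ≤ 2 ^ (k + m) * 2 ^ (2 ^ k + k + m) := Nat.mul_le_mul_right _ h1
    _ = 2 ^ (2 ^ k + 2 * (k + m)) := by rw [← pow_add]; ring_nf
    _ ≤ 2 ^ (2 ^ (k + m) + 2 ^ (k + m)) := Nat.pow_le_pow_right (by norm_num)
        (Nat.add_le_add (Nat.pow_le_pow_right (by norm_num) (by omega)) (aux_two_mul_le _))
    _ = 2 ^ 2 ^ (k + m + 1) := by rw [pow_succ 2 (k+m), Nat.mul_comm, Nat.two_mul]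

private lemma aux_B (j : ℕ) : j * 2 ^ (j + 1) ≤ 2 ^ 2 ^ j := by
  cases j with
  | zero => simp
  | succ n =>
    have h1 : n + 1 ≤ 2 ^ n := (Nat.lt_two_pow_self (n := n))
    calc (n + 1) * 2 ^ (n + 2) ≤ 2 ^ n * 2 ^ (n + 2) := Nat.mul_le_mul_right _ h1
      _ = 2 ^ (2 * (n + 1)) := by rw [← pow_add]; ring_nf
      _ ≤ 2 ^ 2 ^ (n + 1) := Nat.pow_le_pow_right (by norm_num) (aux_two_mul_le _)

private lemma aux_B' (j : ℕ) : (j : ℝ) / ((2 : ℝ) ^ 2 ^ j) ≤ (1/2) * (1/2) ^ j := by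
  have hB' : (j : ℝ) * 2 ^ (j + 1) ≤ 2 ^ 2 ^ j := by exact_mod_cast aux_B j
  rw [div_le_iff₀ (by positivity)]
  have : ((1:ℝ)/2) * (1/2) ^ j * 2 ^ 2 ^ j = 2 ^ 2 ^ j / 2 ^ (j+1) := by
    field_simp [pow_add]; rw [pow_succ, ← mul_assoc, ← mul_pow]; norm_num
  rw [this, le_div_iff₀ (by positivity)]
  linarith

private lemma aux_A' (k m : ℕ) :
    ((k + m + 1 : ℕ) : ℝ) / ((2 : ℝ) ^ 2 ^ (k + m + 1)) ≤
      ((2 : ℝ) ^ 2 ^ k * 2 ^ k)⁻¹ * (1/2) ^ m := by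
  have hA' : ((k + m + 1 : ℕ) : ℝ) * 2 ^ (2 ^ k + k + m) ≤ 2 ^ 2 ^ (k + m + 1) := by
    exact_mod_cast aux_A k m
  rw [div_le_iff₀ (by positivity)]
  have : ((2:ℝ) ^ 2 ^ k * 2 ^ k)⁻¹ * (1/2) ^ m * 2 ^ 2 ^ (k + m + 1)
      = 2 ^ 2 ^ (k + m + 1) / 2 ^ (2 ^ k + k + m) := by
    field_simp [pow_add]
    rw [pow_add, pow_add, mul_comm, mul_assoc, ← mul_pow]; norm_num
  rw [this, le_div_iff₀ (by positivity)]
  linarith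

private lemma aux_int {Ω : Type} {mΩ : MeasurableSpace Ω} (μ : Measure Ω)
    [IsFiniteMeasure μ] (h : Ω → ℝ) (hm : Measurable h) (t : ℝ) :
    IntegrableOn (fun ω => h ω ^ 2) {ω | |h ω| ≤ t} μ := by
  have hS : MeasurableSet {ω | |h ω| ≤ t} := measurableSet_le hm.abs measurable_const
  refine Integrable.mono' (integrable_const (t ^ 2)) ((hm.pow_const 2).aestronglyMeasurable) ?_
  rw [ae_restrict_iff' hS]
  filter_upwards with ω hω
  have h2 : |h ω| ^ 2 ≤ t ^ 2 := pow_le_pow_left₀ (abs_nonneg _) hω 2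
  simpa [Real.norm_eq_abs, abs_pow] using h2

/-- There is a sequence (N_k) of naturals increasing to infinity so fast that
Σ_k k/N_k ≤ 1, and for any random variable h with P(h = N_k) = k/N_k (and h = 0
otherwise), the truncated statistics τ_t = t·P(|h| > t) and
σ_t = (1/t)·E(h²·1_{|h| ≤ t}) satisfy: τ_{N_k} → 0 while σ_{N_k} → ∞, and
τ_{N_k − 1} → ∞ while σ_{N_k − 1} → 0. -/
theorem stmt_17 :
    ∃ N : ℕ → ℕ, StrictMono N ∧ (∀ k, 1 ≤ N k) ∧
      (∑' k : ℕ, ((k : ℝ) / (N k : ℝ))) ≤ 1 ∧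
      ∀ (Ω : Type) (_ : MeasurableSpace Ω) (μ : Measure Ω), IsProbabilityMeasure μ →
        ∀ h : Ω → ℝ, Measurable h →
          (∀ k : ℕ, 1 ≤ k → (μ {ω | h ω = (N k : ℝ)}).toReal = (k : ℝ) / (N k : ℝ)) →
          (∀ ω, h ω = 0 ∨ ∃ k : ℕ, 1 ≤ k ∧ h ω = (N k : ℝ)) →
          ∀ τ σ : ℝ → ℝ,
            (∀ t, 0 < t → τ t = t * (μ {ω | t < |h ω|}).toReal) →
            (∀ t, 0 < t → σ t = t⁻¹ * ∫ ω in {ω | |h ω| ≤ t}, (h ω) ^ 2 ∂μ) →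
            Tendsto (fun k : ℕ => τ (N k)) atTop (nhds 0) ∧
            Tendsto (fun k : ℕ => σ (N k)) atTop atTop ∧
            Tendsto (fun k : ℕ => τ ((N k : ℝ) - 1)) atTop atTop ∧
            Tendsto (fun k : ℕ => σ ((N k : ℝ) - 1)) atTop (nhds 0) := by
  refine ⟨fun k => 2 ^ 2 ^ k, ?_, ?_, ?_, ?_⟩
  · exact fun a b hab => Nat.pow_lt_pow_right one_lt_two (Nat.pow_lt_pow_right one_lt_two hab)
  · intro k; exact Nat.one_le_two_pow
  · -- tsum bound
    have hle : ∀ j : ℕ, (j : ℝ) / ((2 ^ 2 ^ j : ℕ) : ℝ) ≤ (1/2) * (1/2) ^ j := by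
      intro j
      exact_mod_cast aux_B' j
    have hg : Summable (fun j : ℕ => (1/2 : ℝ) * (1/2) ^ j) :=
      (summable_geometric_two).mul_left _
    have hf : Summable (fun j : ℕ => (j : ℝ) / ((2 ^ 2 ^ j : ℕ) : ℝ)) :=
      Summable.of_nonneg_of_le (fun j => by positivity) hle hg
    calc (∑' k : ℕ, ((k : ℝ) / ((2 ^ 2 ^ k : ℕ) : ℝ))) ≤ ∑' j : ℕ, (1/2 : ℝ) * (1/2) ^ j :=
          Summable.tsum_le_tsum hle hf hg
      _ = (1/2) * 2 := by rw [tsum_mul_left, tsum_geometric_two]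
      _ = 1 := by norm_num
  · intro Ω mΩ μ hμ h hm hlaw hsupp τ σ hτ hσ
    -- basic setup
    set Nr : ℕ → ℝ := fun k => ((2 ^ 2 ^ k : ℕ) : ℝ) with hNr
    have hNcast : ∀ k, Nr k = (2 : ℝ) ^ 2 ^ k := by intro k; simp [hNr]
    have hNpos : ∀ k, (0 : ℝ) < Nr k := by intro k; rw [hNcast]; positivity
    have hNmono : ∀ {i j : ℕ}, i < j → Nr i < Nr j := by
      intro i j hij
      have h2 : (2:ℕ) ^ 2 ^ i < 2 ^ 2 ^ j :=
        Nat.pow_lt_pow_right one_lt_two (Nat.pow_lt_pow_right one_lt_two hij)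
      simp only [hNr]
      exact_mod_cast h2
    have hN2 : ∀ k, (2 : ℝ) ≤ Nr k := by
      intro k
      rw [hNcast]
      calc (2:ℝ) = 2 ^ 1 := by norm_num
        _ ≤ 2 ^ 2 ^ k := by
          apply pow_le_pow_right₀ (by norm_num) (Nat.one_le_two_pow)
    set A : ℕ → Set Ω := fun j => {ω | h ω = Nr j} with hA
    have hAmeas : ∀ j, MeasurableSet (A j) := by
      intro j
      exact hm (measurableSet_singleton _)
    have hAval : ∀ j, 1 ≤ j → μ (A j) = ENNReal.ofReal ((j : ℝ) / Nr j) := by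
      intro j hj
      rw [← hlaw j hj, ENNReal.ofReal_toReal (measure_ne_top μ _)]
    have hAtoReal : ∀ j, 1 ≤ j → (μ (A j)).toReal = (j : ℝ) / Nr j := fun j hj => hlaw j hj
    have hAdisj : ∀ i j, i ≠ j → Disjoint (A i) (A j) := by
      intro i j hij
      rw [Set.disjoint_left]
      intro ω h1 h2
      have : Nr i = Nr j := by rw [← h1, ← h2]
      rcases lt_trichotomy i j with hc | hc | hc
      · exact absurd this (ne_of_lt (hNmono hc))
      · exact hij hc
      · exact absurd this.symm (ne_of_lt (hNmono hc))
    -- goal 1 : τ (N k) → 0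
    have goal1 : Tendsto (fun k : ℕ => τ (Nr k)) atTop (nhds 0) := by
      have key : ∀ k : ℕ, τ (Nr k) ≤ 2 * (1/2) ^ k := by
        intro k
        set c : ℝ := ((2 : ℝ) ^ 2 ^ k * 2 ^ k)⁻¹ with hc
        have hcpos : 0 < c := by rw [hc]; positivity
        have hsub : {ω | Nr k < |h ω|} ⊆ ⋃ m : ℕ, A (k + m + 1) := by
          intro ω hω
          simp only [Set.mem_setOf_eq] at hω
          rcases hsupp ω with h0 | ⟨j, hj1, hjv⟩
          · exfalso
            rw [h0, abs_zero] at hω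
            exact absurd hω (not_lt.2 (le_of_lt (hNpos k)))
          · have habs : |h ω| = Nr j := by
              rw [hjv]; exact abs_of_nonneg (le_of_lt (hNpos j))
            have hkj : k < j := by
              by_contra hcon
              push_neg at hcon
              have : Nr j ≤ Nr k := by
                rcases eq_or_lt_of_le hcon with he | hl
                · rw [he]
                · exact le_of_lt (hNmono hl)
              rw [habs] at hω
              exact absurd hω (not_lt.2 this)
            refine Set.mem_iUnion.2 ⟨j - k - 1, ?_⟩
            have : k + (j - k - 1) + 1 = j := by omega
            rw [this]
            exact hjv
        have hmeasle : μ {ω | Nr k < |h ω|} ≤ ENNReal.ofReal (c * 2) := by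
          calc μ {ω | Nr k < |h ω|} ≤ μ (⋃ m : ℕ, A (k + m + 1)) := measure_mono hsub
            _ ≤ ∑' m : ℕ, μ (A (k + m + 1)) := measure_iUnion_le _
            _ ≤ ∑' m : ℕ, ENNReal.ofReal (c * (1/2) ^ m) := by
                apply ENNReal.tsum_le_tsum
                intro m
                rw [hAval _ (by omega)]
                apply ENNReal.ofReal_le_ofReal
                have := aux_A' k m
                rw [hNcast]
                calc ((k + m + 1 : ℕ) : ℝ) / (2 : ℝ) ^ 2 ^ (k + m + 1)
                    ≤ ((2 : ℝ) ^ 2 ^ k * 2 ^ k)⁻¹ * (1/2) ^ m := this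
                  _ = c * (1/2) ^ m := by rw [hc]
            _ = ENNReal.ofReal (∑' m : ℕ, c * (1/2) ^ m) := by
                rw [ENNReal.ofReal_tsum_of_nonneg (fun m => by positivity)
                  ((summable_geometric_two).mul_left _)]
            _ = ENNReal.ofReal (c * 2) := by rw [tsum_mul_left, tsum_geometric_two]
        have htoReal : (μ {ω | Nr k < |h ω|}).toReal ≤ c * 2 :=
          ENNReal.toReal_le_of_le_ofReal (by positivity) hmeasle
        rw [hτ _ (hNpos k)]
        calc Nr k * (μ {ω | Nr k < |h ω|}).toReal ≤ Nr k * (c * 2) := by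
              exact mul_le_mul_of_nonneg_left htoReal (le_of_lt (hNpos k))
          _ = 2 * (1/2) ^ k := by
              rw [hNcast, hc]
              field_simp
              rw [← mul_pow]; norm_num
      have hnn : ∀ k : ℕ, 0 ≤ τ (Nr k) := by
        intro k
        rw [hτ _ (hNpos k)]
        exact mul_nonneg (le_of_lt (hNpos k)) ENNReal.toReal_nonneg
      have hupper : Tendsto (fun k : ℕ => 2 * (1/2 : ℝ) ^ k) atTop (nhds 0) := by
        have := tendsto_pow_atTop_nhds_zero_of_lt_one (by norm_num : (0:ℝ) ≤ 1/2) (by norm_num)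
        simpa using this.const_mul 2
      exact tendsto_of_tendsto_of_tendsto_of_le_of_le tendsto_const_nhds hupper hnn key
    -- goal 2 : σ (N k) → ∞
    have goal2 : Tendsto (fun k : ℕ => σ (Nr k)) atTop atTop := by
      have key : ∀ k : ℕ, 1 ≤ k → (k : ℝ) ≤ σ (Nr k) := by
        intro k hk
        rw [hσ _ (hNpos k)]
        have hint : IntegrableOn (fun ω => h ω ^ 2) {ω | |h ω| ≤ Nr k} μ :=
          aux_int μ h hm (Nr k)
        have hsub : A k ⊆ {ω | |h ω| ≤ Nr k} := by
          intro ω hω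
          simp only [hA, Set.mem_setOf_eq] at hω ⊢
          rw [hω, abs_of_nonneg (le_of_lt (hNpos k))]
        have h1 : ∫ ω in A k, h ω ^ 2 ∂μ ≤ ∫ ω in {ω | |h ω| ≤ Nr k}, h ω ^ 2 ∂μ := by
          apply setIntegral_mono_set hint
          · filter_upwards with ω; positivity
          · exact Filter.Eventually.of_forall hsub
        have h2 : ∫ ω in A k, h ω ^ 2 ∂μ = ((k : ℝ) / Nr k) * Nr k ^ 2 := by
          rw [setIntegral_congr_fun (hAmeas k) (g := fun _ => Nr k ^ 2)
            (fun ω hω => by simp only [hA, Set.mem_setOf_eq] at hω; rw [hω]),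
            setIntegral_const, measureReal_def, hAtoReal k hk, smul_eq_mul]
        have hne : Nr k ≠ 0 := ne_of_gt (hNpos k)
        have h3 : (Nr k)⁻¹ * (((k : ℝ) / Nr k) * Nr k ^ 2) = (k : ℝ) := by
          field_simp
        rw [← h3]
        apply mul_le_mul_of_nonneg_left _ (le_of_lt (inv_pos.2 (hNpos k)))
        exact le_trans (le_of_eq h2.symm) h1
      apply tendsto_atTop_mono' _ _ tendsto_natCast_atTop_atTop
      filter_upwards [eventually_ge_atTop 1] with k hk
      exact key k hk
    -- goal 3 : τ (N k - 1) → ∞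
    have goal3 : Tendsto (fun k : ℕ => τ (Nr k - 1)) atTop atTop := by
      have key : ∀ k : ℕ, 1 ≤ k → (k : ℝ) / 4 ≤ τ (Nr k - 1) := by
        intro k hk
        have htpos : 0 < Nr k - 1 := by have := hN2 k; linarith
        rw [hτ _ htpos]
        have hsub : A k ⊆ {ω | Nr k - 1 < |h ω|} := by
          intro ω hω
          simp only [hA, Set.mem_setOf_eq] at hω ⊢
          rw [hω, abs_of_nonneg (le_of_lt (hNpos k))]
          linarith
        have hmle : (μ (A k)).toReal ≤ (μ {ω | Nr k - 1 < |h ω|}).toReal :=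
          ENNReal.toReal_mono (measure_ne_top μ _) (measure_mono hsub)
        have h1 : (k : ℝ) / Nr k ≤ (μ {ω | Nr k - 1 < |h ω|}).toReal := by
          rw [← hAtoReal k hk]
          exact hmle
        have h2 : (k : ℝ) / 4 ≤ (Nr k - 1) * ((k : ℝ) / Nr k) := by
          have hn2 := hN2 k
          have hnpos := hNpos k
          have hknn : (0:ℝ) ≤ (k:ℝ) := Nat.cast_nonneg k
          have heq : (Nr k - 1) * ((k : ℝ) / Nr k) = (k : ℝ) * (1 - (Nr k)⁻¹) := by
            field_simp
          rw [heq]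
          have hinv : (Nr k)⁻¹ ≤ 1/2 := by
            rw [show (1:ℝ)/2 = 2⁻¹ by norm_num]
            exact inv_anti₀ (by norm_num) hn2
          nlinarith [mul_le_mul_of_nonneg_left hinv hknn]
        calc (k : ℝ) / 4 ≤ (Nr k - 1) * ((k : ℝ) / Nr k) := h2
          _ ≤ (Nr k - 1) * (μ {ω | Nr k - 1 < |h ω|}).toReal :=
            mul_le_mul_of_nonneg_left h1 (le_of_lt htpos)
      have : Tendsto (fun k : ℕ => (k : ℝ) / 4) atTop atTop :=
        tendsto_natCast_atTop_atTop.atTop_div_const (by norm_num)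
      apply tendsto_atTop_mono' _ _ this
      filter_upwards [eventually_ge_atTop 1] with k hk
      exact key k hk
    -- goal 4 : σ (N k - 1) → 0
    have goal4 : Tendsto (fun k : ℕ => σ (Nr k - 1)) atTop (nhds 0) := by
      have hnn : ∀ k : ℕ, 1 ≤ k → 0 ≤ σ (Nr k - 1) := by
        intro k hk
        have htpos : 0 < Nr k - 1 := by have := hN2 k; linarith
        rw [hσ _ htpos]
        apply mul_nonneg (le_of_lt (inv_pos.2 htpos))
        apply setIntegral_nonneg (measurableSet_le hm.abs measurable_const)
        intro ω _; positivity
      have key : ∀ k : ℕ, 1 ≤ k → σ (Nr k - 1) ≤ 2 * (k:ℝ)^2 * (1/2) ^ k := by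
        intro k hk
        have htpos : 0 < Nr k - 1 := by have := hN2 k; linarith
        rw [hσ _ htpos]
        set S : Set Ω := {ω | |h ω| ≤ Nr k - 1} with hS
        have hSmeas : MeasurableSet S := measurableSet_le hm.abs measurable_const
        have hint : IntegrableOn (fun ω => h ω ^ 2) S μ := aux_int μ h hm _
        set T : Set Ω := ⋃ j ∈ Finset.Ioo 0 k, A j with hT
        have hTmeas : MeasurableSet T := by
          apply Finset.measurableSet_biUnion
          intro j _; exact hAmeas j
        have hTsub : T ⊆ S := by
          intro ω hω
          simp only [hT, Set.mem_iUnion] at hω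
          obtain ⟨j, hj, hωj⟩ := hω
          simp only [Finset.mem_Ioo] at hj
          simp only [hA, Set.mem_setOf_eq] at hωj
          simp only [hS, Set.mem_setOf_eq]
          rw [hωj, abs_of_nonneg (le_of_lt (hNpos j))]
          have : Nr j < Nr k := hNmono hj.2
          have hNnat : (2:ℕ) ^ 2 ^ j + 1 ≤ 2 ^ 2 ^ k := by
            have : (2:ℕ) ^ 2 ^ j < 2 ^ 2 ^ k :=
              Nat.pow_lt_pow_right one_lt_two (Nat.pow_lt_pow_right one_lt_two hj.2)
            omega
          have : Nr j + 1 ≤ Nr k := by simp only [hNr]; exact_mod_cast hNnat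
          linarith
        -- split integral
        have hsplit : ∫ ω in S, h ω ^ 2 ∂μ
            = ∫ ω in T, h ω ^ 2 ∂μ + ∫ ω in S \ T, h ω ^ 2 ∂μ := by
          rw [← setIntegral_union (Set.disjoint_sdiff_right) (hSmeas.diff hTmeas)
            (hint.mono_set hTsub) (hint.mono_set Set.diff_subset),
            Set.union_diff_cancel hTsub]
        have hzero : ∫ ω in S \ T, h ω ^ 2 ∂μ = 0 := by
          rw [setIntegral_congr_fun (hSmeas.diff hTmeas) (g := fun _ => (0:ℝ))]
          · simp
          · intro ω hω
            obtain ⟨hωS, hωT⟩ := hω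
            rcases hsupp ω with h0 | ⟨j, hj1, hjv⟩
            · simp [h0]
            · exfalso
              apply hωT
              simp only [hT, Set.mem_iUnion]
              refine ⟨j, ?_, hjv⟩
              simp only [Finset.mem_Ioo]
              refine ⟨hj1, ?_⟩
              simp only [hS, Set.mem_setOf_eq] at hωS
              rw [hjv, abs_of_nonneg (le_of_lt (hNpos j))] at hωS
              by_contra hcon
              push_neg at hcon
              have : Nr k ≤ Nr j := by
                rcases eq_or_lt_of_le hcon with he | hl
                · rw [he]
                · exact le_of_lt (hNmono hl)
              linarith
        have hTsum : ∫ ω in T, h ω ^ 2 ∂μ = ∑ j ∈ Finset.Ioo 0 k, ((j : ℝ) / Nr j) * Nr j ^ 2 := by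
          rw [hT, integral_biUnion_finset _ (fun j _ => hAmeas j)
            (fun i _ j _ hij => hAdisj i j hij)
            (fun j _ => hint.mono_set (by
              intro ω hω
              apply hTsub
              simp only [hT, Set.mem_iUnion]
              exact ⟨j, by assumption, hω⟩))]
          apply Finset.sum_congr rfl
          intro j hj
          simp only [Finset.mem_Ioo] at hj
          rw [setIntegral_congr_fun (hAmeas j) (g := fun _ => Nr j ^ 2)
            (fun ω hω => by simp only [hA, Set.mem_setOf_eq] at hω; rw [hω]),
            setIntegral_const, measureReal_def, hAtoReal j hj.1, smul_eq_mul]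
        have hsumle : ∑ j ∈ Finset.Ioo 0 k, ((j : ℝ) / Nr j) * Nr j ^ 2
            ≤ (k : ℝ) ^ 2 * Nr (k - 1) := by
          have hterm : ∀ j ∈ Finset.Ioo 0 k, ((j : ℝ) / Nr j) * Nr j ^ 2 ≤ (k : ℝ) * Nr (k-1) := by
            intro j hj
            simp only [Finset.mem_Ioo] at hj
            have hjk : (j : ℝ) ≤ (k : ℝ) := by exact_mod_cast le_of_lt hj.2
            have hNjk : Nr j ≤ Nr (k - 1) := by
              rcases eq_or_lt_of_le (by omega : j ≤ k - 1) with he | hl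
              · rw [he]
              · exact le_of_lt (hNmono hl)
            have : ((j : ℝ) / Nr j) * Nr j ^ 2 = (j : ℝ) * Nr j := by
              field_simp [ne_of_gt (hNpos j)]
            rw [this]
            apply mul_le_mul hjk hNjk (le_of_lt (hNpos j)) (Nat.cast_nonneg k)
          calc ∑ j ∈ Finset.Ioo 0 k, ((j : ℝ) / Nr j) * Nr j ^ 2
              ≤ ∑ _j ∈ Finset.Ioo 0 k, (k : ℝ) * Nr (k-1) := Finset.sum_le_sum hterm
            _ = (Finset.Ioo 0 k).card * ((k : ℝ) * Nr (k-1)) := by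
                rw [Finset.sum_const, nsmul_eq_mul]
            _ ≤ (k : ℝ) * ((k : ℝ) * Nr (k-1)) := by
                apply mul_le_mul_of_nonneg_right _
                  (mul_nonneg (Nat.cast_nonneg k) (le_of_lt (hNpos _)))
                rw [Nat.card_Ioo]
                exact_mod_cast Nat.sub_le k 1
            _ = (k : ℝ) ^ 2 * Nr (k-1) := by ring
        have hbound : (Nr k - 1)⁻¹ * ∫ ω in S, h ω ^ 2 ∂μ
            ≤ (Nr k - 1)⁻¹ * ((k : ℝ) ^ 2 * Nr (k - 1)) := by
          apply mul_le_mul_of_nonneg_left _ (le_of_lt (inv_pos.2 htpos))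
          rw [hsplit, hzero, add_zero, hTsum]
          exact hsumle
        refine le_trans hbound ?_
        -- (Nr k - 1)⁻¹ * (k^2 * Nr (k-1)) ≤ 2 k^2 (1/2)^k
        have hhalf : Nr k / 2 ≤ Nr k - 1 := by have := hN2 k; linarith
        have hstep1 : (Nr k - 1)⁻¹ ≤ 2 / Nr k := by
          have h2pos : (0:ℝ) < Nr k / 2 := by have := hNpos k; linarith
          have := inv_anti₀ h2pos hhalf
          rwa [inv_div] at this
        have hratio : Nr (k - 1) / Nr k ≤ (1/2) ^ k := by
          rw [hNcast, hNcast]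
          have hexp : 2 ^ (k - 1) + k ≤ 2 ^ k := by
            have h1 : k ≤ 2 ^ (k - 1) := by
              have := (Nat.lt_two_pow_self (n := k - 1))
              omega
            have h2 : 2 ^ (k - 1) + 2 ^ (k - 1) = 2 ^ k := by
              rw [← Nat.two_mul, ← pow_succ']
              congr 1
              omega
            omega
          rw [div_le_iff₀ (by positivity), div_pow, one_pow, div_mul_eq_mul_div,
            one_mul, le_div_iff₀ (by positivity), ← pow_add]
          exact pow_le_pow_right₀ (by norm_num) hexp
        calc (Nr k - 1)⁻¹ * ((k : ℝ) ^ 2 * Nr (k - 1))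
            ≤ (2 / Nr k) * ((k : ℝ) ^ 2 * Nr (k - 1)) := by
              apply mul_le_mul_of_nonneg_right hstep1
                (mul_nonneg (by positivity) (le_of_lt (hNpos _)))
          _ = 2 * (k : ℝ) ^ 2 * (Nr (k-1) / Nr k) := by ring
          _ ≤ 2 * (k : ℝ) ^ 2 * (1/2) ^ k := by
              apply mul_le_mul_of_nonneg_left hratio (by positivity)
      have hupper : Tendsto (fun k : ℕ => 2 * (k:ℝ)^2 * (1/2) ^ k) atTop (nhds 0) := by
        have hs : Summable (fun k : ℕ => (k:ℝ)^2 * (1/2) ^ k) := by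
          have := summable_norm_pow_mul_geometric_of_norm_lt_one (R := ℝ) 2
            (r := 1/2) (by rw [Real.norm_eq_abs, abs_lt]; constructor <;> norm_num)
          apply Summable.of_norm
          simpa using this
        have h0 : Tendsto (fun k : ℕ => (k:ℝ)^2 * (1/2) ^ k) atTop (nhds 0) :=
          hs.tendsto_atTop_zero
        have := h0.const_mul 2
        simp only [mul_zero] at this
        convert this using 2 with k
        ring
      apply tendsto_of_tendsto_of_tendsto_of_le_of_le' tendsto_const_nhds hupper
      · filter_upwards [eventually_ge_atTop 1] with k hk
        exact hnn k hk
      · filter_upwards [eventually_ge_atTop 1] with k hk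
        exact key k hk
    exact ⟨goal1, goal2, goal3, goal4⟩
end
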